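/- arXiv:2405.19312 — 3 statements merged into one kernel-verified Lean document; each statement's English description precedes it below -/
import Mathlib

section
/- Under a BIBD, the adjusted (block-effect-corrected) estimator is unbiased for the block-level pairwise contrast: E[τ̂^{BIBD-adj}(z₁,z₂)] = τ(z₁,z₂) = Ȳ(z₁) − Ȳ(z₂). (Theorem 4) -/
open Finset Filter MeasureTheory
open scoped BigOperators Topology Classical

noncomputable section

/-- Expectation of `f` under the uniform distribution on the finite set `Ω`. -/
def fexp {α : Type*} (Ω : Finset α) (f : α → ℝ) : ℝ := (∑ ω ∈ Ω, f ω) / Ω.card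

/-- Probability of the event `e` under the uniform distribution on `Ω`. -/
def fpr {α : Type*} (Ω : Finset α) (e : α → Prop) : ℝ :=
  ((Ω.filter e).card : ℝ) / Ω.card

/-- Covariance of `f` and `g` under the uniform distribution on `Ω`. -/
def fcov {α : Type*} (Ω : Finset α) (f g : α → ℝ) : ℝ :=
  fexp Ω (fun ω => (f ω - fexp Ω f) * (g ω - fexp Ω g))

/-- Variance of `f` under the uniform distribution on `Ω`. -/
def fvar {α : Type*} (Ω : Finset α) (f : α → ℝ) : ℝ := fcov Ω f f

/-- Conditional expectation of `f` given the event `e`, under the uniform distribution on `Ω`. -/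
def fcexp {α : Type*} (Ω : Finset α) (e : α → Prop) (f : α → ℝ) : ℝ :=
  (∑ ω ∈ Ω.filter e, f ω) / (Ω.filter e).card

/-- An incomplete block design on a finite population, with `T` treatments. -/
structure IBD (T : ℕ) where
  /-- number of blocks -/
  K : ℕ
  hK : 0 < K
  /-- number of treatments assigned to each block -/
  t : ℕ
  ht : 2 ≤ t
  htT : t < T
  /-- number of units -/
  N : ℕ
  /-- block membership -/
  b : Fin N → Fin K
  /-- potential outcomes -/
  Y : Fin N → Fin T → ℝ
  /-- block weights -/
  w : Fin K → ℝ
  hw : ∑ k, w k = 1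
  /-- multiplicity of each treatment subset in the design; the support is `𝒲` -/
  r : Finset (Fin T) → ℕ
  hrcard : ∀ ω, r ω ≠ 0 → ω.card = t
  hrK : ∑ ω : Finset (Fin T), r ω = K
  hdvd : ∀ k : Fin K, t ∣ (Finset.univ.filter (fun i => b i = k)).card
  hnpos : ∀ k : Fin K, 0 < (Finset.univ.filter (fun i => b i = k)).card

namespace IBD

variable {T : ℕ} (D : IBD T)

/-- The units in block `k`. -/
def blk (k : Fin D.K) : Finset (Fin D.N) := Finset.univ.filter (fun i => D.b i = k)

/-- Block size `n_k`. -/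
def n (k : Fin D.K) : ℕ := (D.blk k).card

/-- Block mean of potential outcomes, `Ȳ_k(z)`. -/
def Ybar (k : Fin D.K) (z : Fin T) : ℝ := (∑ i ∈ D.blk k, D.Y i z) / (D.n k : ℝ)

/-- Weighted average of potential outcomes, `Ȳ(z;w)`. -/
def Ybarw (z : Fin T) : ℝ := ∑ k, D.w k * D.Ybar k z

/-- Contrast estimand `τ_w(g)`. -/
def tauw (g : Fin T → ℝ) : ℝ := ∑ z, g z * D.Ybarw z

/-- `L_z`: number of blocks whose treatment subset contains `z`. -/
def Lcount (z : Fin T) : ℕ :=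
  ∑ ω ∈ Finset.univ.filter (fun ω : Finset (Fin T) => z ∈ ω), D.r ω

/-- `l_{z,z'}`: number of blocks whose treatment subset contains both `z` and `z'`. -/
def lcount (z z' : Fin T) : ℕ :=
  ∑ ω ∈ Finset.univ.filter (fun ω : Finset (Fin T) => z ∈ ω ∧ z' ∈ ω), D.r ω

/-- `p_z = L_z/K`. -/
def p (z : Fin T) : ℝ := (D.Lcount z : ℝ) / (D.K : ℝ)

/-- `q_{z,z'} = l_{z,z'}/K`. -/
def q (z z' : Fin T) : ℝ := (D.lcount z z' : ℝ) / (D.K : ℝ)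

/-- Within-block variance `S_k²(z)`. -/
def Sk2 (k : Fin D.K) (z : Fin T) : ℝ :=
  (∑ i ∈ D.blk k, (D.Y i z - D.Ybar k z) ^ 2) / ((D.n k : ℝ) - 1)

/-- Within-block treatment-effect heterogeneity `S_k²(τ(z,z'))`. -/
def Sk2tau (k : Fin D.K) (z z' : Fin T) : ℝ :=
  (∑ i ∈ D.blk k, (D.Y i z - D.Y i z' - (D.Ybar k z - D.Ybar k z')) ^ 2) / ((D.n k : ℝ) - 1)

/-- Between-block variance `S_HT²(z)`. -/
def SHT2 (z : Fin T) : ℝ :=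
  (∑ k, ((D.K : ℝ) * D.w k * D.Ybar k z - D.Ybarw z) ^ 2) / ((D.K : ℝ) - 1)

/-- Between-block heterogeneity `S_HT²(τ(z,z'))`. -/
def SHT2tau (z z' : Fin T) : ℝ :=
  (∑ k, ((D.K : ℝ) * D.w k * (D.Ybar k z - D.Ybar k z') - (D.Ybarw z - D.Ybarw z')) ^ 2) /
    ((D.K : ℝ) - 1)

/-- Between-block variance `S_Haj²(z)` for the Hájek estimator. -/
def SHaj2 (z : Fin T) : ℝ :=
  (∑ k, ((D.K : ℝ) * D.w k) ^ 2 * (D.Ybar k z - D.Ybarw z) ^ 2) / ((D.K : ℝ) - 1)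

/-- Between-block heterogeneity `S_Haj²(τ(z,z'))`. -/
def SHaj2tau (z z' : Fin T) : ℝ :=
  (∑ k, ((D.K : ℝ) * D.w k) ^ 2 *
    (D.Ybar k z - D.Ybar k z' - (D.Ybarw z - D.Ybarw z')) ^ 2) / ((D.K : ℝ) - 1)

/-- `S_HT²(τ_w(g))`. -/
def SHT2taug (g : Fin T → ℝ) : ℝ :=
  (∑ k, ((D.K : ℝ) * D.w k * (∑ z, g z * D.Ybar k z) - ∑ z, g z * D.Ybarw z) ^ 2) /
    ((D.K : ℝ) - 1)

/-- `S_Haj²(τ_w(g))`. -/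
def SHaj2taug (g : Fin T → ℝ) : ℝ :=
  (∑ k, ((D.K : ℝ) * D.w k * ((∑ z, g z * D.Ybar k z) - ∑ z, g z * D.Ybarw z)) ^ 2) /
    ((D.K : ℝ) - 1)

/-- `S_k²(τ_w(g))`. -/
def Sk2taug (k : Fin D.K) (g : Fin T → ℝ) : ℝ :=
  (∑ i ∈ D.blk k, ((D.K : ℝ) * D.w k * ((∑ z, g z * D.Y i z) - ∑ z, g z * D.Ybar k z)) ^ 2) /
    ((D.n k : ℝ) - 1)

/-- Between-block covariance matrix `B_HT`. -/
def BHT (z z' : Fin T) : ℝ :=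
  (1 / 2) * ((D.q z z' / (D.p z * D.p z') - 1) * (D.SHT2 z + D.SHT2 z' - D.SHT2tau z z'))

/-- Between-block covariance matrix `B_Haj`. -/
def BHaj (z z' : Fin T) : ℝ :=
  (1 / 2) * ((D.q z z' / (D.p z * D.p z') - 1) * (D.SHaj2 z + D.SHaj2 z' - D.SHaj2tau z z'))

/-- Within-block covariance matrix `W`. -/
def Wmat (z z' : Fin T) : ℝ :=
  if z = z' then
    (1 / D.p z) * ((1 / (D.K : ℝ)) * ∑ k, ((D.K : ℝ) * D.w k) ^ 2 *
      (((D.t : ℝ) - 1) * D.Sk2 k z / (D.n k : ℝ)))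
  else
    -(D.q z z' / (2 * D.p z * D.p z')) * ((1 / (D.K : ℝ)) * ∑ k, ((D.K : ℝ) * D.w k) ^ 2 *
      ((D.Sk2 k z + D.Sk2 k z' - D.Sk2tau k z z') / (D.n k : ℝ)))

/-- `Σ_HT = B_HT + W`. -/
def SigmaHT (z z' : Fin T) : ℝ := D.BHT z z' + D.Wmat z z'

/-- `Σ_Haj = B_Haj + W`. -/
def SigmaHaj (z z' : Fin T) : ℝ := D.BHaj z z' + D.Wmat z z'

/-- The type of a complete treatment assignment: stage 1 (subsets to blocks) and
stage 2 (treatments to units). -/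
abbrev Assign : Type := (Fin D.K → Finset (Fin T)) × (Fin D.N → Fin T)

/-- Validity of the stage-1 assignment: each subset `ω` is assigned to exactly `r_ω` blocks. -/
def ValidR (R : Fin D.K → Finset (Fin T)) : Prop :=
  ∀ ω : Finset (Fin T), (Finset.univ.filter (fun k => R k = ω)).card = D.r ω

/-- Validity of the stage-2 assignment: within block `k`, exactly `n_k/t` units receive
each treatment of `R k`. -/
def ValidZ (R : Fin D.K → Finset (Fin T)) (Z : Fin D.N → Fin T) : Prop :=
  (∀ i, Z i ∈ R (D.b i)) ∧
  ∀ k : Fin D.K, ∀ z ∈ R k, ((D.blk k).filter (fun i => Z i = z)).card = D.n k / D.t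

/-- The set of all valid assignments; the two-stage IBD randomization is the uniform
distribution on this set. -/
def Omega : Finset D.Assign :=
  Finset.univ.filter (fun a => D.ValidR a.1 ∧ D.ValidZ a.1 a.2)

/-- Observed block mean `Ŷ_k(z)` (zero if `z` is not assigned to block `k`). -/
def Yhatk (a : D.Assign) (k : Fin D.K) (z : Fin T) : ℝ :=
  if z ∈ a.1 k then
    (∑ i ∈ (D.blk k).filter (fun i => a.2 i = z), D.Y i z) / ((D.n k : ℝ) / (D.t : ℝ))
  else 0

/-- Horvitz–Thompson estimator `Ŷ_HT(z)`. -/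
def YhatHT (a : D.Assign) (z : Fin T) : ℝ := ∑ k, D.w k * D.Yhatk a k z / D.p z

/-- `1̂_HT(z)`, the Horvitz–Thompson estimator of the constant 1. -/
def onehatHT (a : D.Assign) (z : Fin T) : ℝ :=
  ∑ k, D.w k * (if z ∈ a.1 k then (1 : ℝ) else 0) / D.p z

/-- Hájek estimator `Ŷ_Haj(z)`. -/
def YhatHaj (a : D.Assign) (z : Fin T) : ℝ := D.YhatHT a z / D.onehatHT a z

/-- Horvitz–Thompson contrast estimator `τ̂_HT(g)`. -/
def tauhatHT (a : D.Assign) (g : Fin T → ℝ) : ℝ := ∑ z, g z * D.YhatHT a z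

/-- Hájek contrast estimator `τ̂_Haj(g)`. -/
def tauhatHaj (a : D.Assign) (g : Fin T → ℝ) : ℝ := ∑ z, g z * D.YhatHaj a z

end IBD
namespace IBD

variable {T : ℕ} (D : IBD T)

/-- Sample within-block variance `s_k²(z)` (zero if `z ∉ R_k`). -/
def sk2 (a : D.Assign) (k : Fin D.K) (z : Fin T) : ℝ :=
  if z ∈ a.1 k then
    (∑ i ∈ (D.blk k).filter (fun i => a.2 i = z), (D.Y i z - D.Yhatk a k z) ^ 2) /
      ((D.n k : ℝ) / (D.t : ℝ) - 1)
  else 0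

/-- Sample between-block variance `s_HT²(z)`. -/
def sHT2 (a : D.Assign) (z : Fin T) : ℝ :=
  (∑ k, if z ∈ a.1 k then ((D.K : ℝ) * D.w k * D.Yhatk a k z - D.YhatHT a z) ^ 2 else 0) /
    ((D.Lcount z : ℝ) - 1)

/-- `Ŷ_A(z)` for the pair `(z,z')`: weighted mean of treatment `z` over blocks assigned
both `z` and `z'`. -/
def YhatA (a : D.Assign) (z z' : Fin T) : ℝ :=
  (∑ k, if z ∈ a.1 k ∧ z' ∈ a.1 k then (D.K : ℝ) * D.w k * D.Yhatk a k z else 0) /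
    (D.lcount z z' : ℝ)

/-- Sample between-block heterogeneity `s_HT²(τ(z,z'))`. -/
def sHT2tau (a : D.Assign) (z z' : Fin T) : ℝ :=
  (∑ k, if z ∈ a.1 k ∧ z' ∈ a.1 k then
      ((D.K : ℝ) * D.w k * (D.Yhatk a k z - D.Yhatk a k z') -
        (D.YhatA a z z' - D.YhatA a z' z)) ^ 2
    else 0) / ((D.lcount z z' : ℝ) - 1)

/-- Sample between-block variance `s_Haj²(z)`. -/
def sHaj2 (a : D.Assign) (z : Fin T) : ℝ :=
  (∑ k, if z ∈ a.1 k then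
      ((D.K : ℝ) * D.w k) ^ 2 * (D.Yhatk a k z - D.YhatHaj a z) ^ 2
    else 0) / ((D.Lcount z : ℝ) - 1)

/-- `Ŷ_{A'}(z)` for the pair `(z,z')`. -/
def YhatA' (a : D.Assign) (z z' : Fin T) : ℝ :=
  (∑ k, if z ∈ a.1 k ∧ z' ∈ a.1 k then D.w k * D.Yhatk a k z else 0) /
    (∑ k, if z ∈ a.1 k ∧ z' ∈ a.1 k then D.w k else 0)

/-- Sample between-block heterogeneity `s_Haj²(τ(z,z'))`. -/
def sHaj2tau (a : D.Assign) (z z' : Fin T) : ℝ :=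
  (∑ k, if z ∈ a.1 k ∧ z' ∈ a.1 k then
      ((D.K : ℝ) * D.w k) ^ 2 * (D.Yhatk a k z - D.Yhatk a k z' -
        (D.YhatA' a z z' - D.YhatA' a z' z)) ^ 2
    else 0) / ((D.lcount z z' : ℝ) - 1)

/-- Between-block covariance estimator `Ŝ_HT^{bb}(z,z')`. -/
def ShatHTbb (a : D.Assign) (z z' : Fin T) : ℝ :=
  if 2 ≤ D.lcount z z' then
    ((D.lcount z z' : ℝ) / (2 * (D.Lcount z : ℝ) * (D.Lcount z' : ℝ))) *
      (D.sHT2 a z + D.sHT2 a z' - D.sHT2tau a z z')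
  else 0

/-- Between-block covariance estimator `Ŝ_Haj^{bb}(z,z')`. -/
def ShatHajbb (a : D.Assign) (z z' : Fin T) : ℝ :=
  if 2 ≤ D.lcount z z' then
    ((D.lcount z z' : ℝ) / (2 * (D.Lcount z : ℝ) * (D.Lcount z' : ℝ))) *
      (D.sHaj2 a z + D.sHaj2 a z' - D.sHaj2tau a z z')
  else 0

/-- Within-block covariance estimator `Ŝ_HT^{wb}(z,z')`. -/
def ShatHTwb (a : D.Assign) (z z' : Fin T) : ℝ :=
  (if 2 ≤ D.lcount z z' then
    (1 - (D.Lcount z : ℝ) * (D.Lcount z' : ℝ) / ((D.K : ℝ) * (D.lcount z z' : ℝ))) *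
      D.ShatHTbb a z z'
   else 0) +
  (if z = z' then
    (1 / D.p z) * ((1 / (D.K : ℝ) ^ 2) * ∑ k,
      if z ∈ a.1 k then ((D.K : ℝ) * D.w k) ^ 2 * D.sk2 a k z * (D.t : ℝ) / (D.n k : ℝ) else 0)
   else 0)

/-- Within-block covariance estimator `Ŝ_Haj^{wb}(z,z')`. -/
def ShatHajwb (a : D.Assign) (z z' : Fin T) : ℝ :=
  (if 2 ≤ D.lcount z z' then
    (1 - (D.Lcount z : ℝ) * (D.Lcount z' : ℝ) / ((D.K : ℝ) * (D.lcount z z' : ℝ))) *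
      D.ShatHajbb a z z'
   else 0) +
  (if z = z' then
    (1 / D.p z) * ((1 / (D.K : ℝ) ^ 2) * ∑ k,
      if z ∈ a.1 k then ((D.K : ℝ) * D.w k) ^ 2 * D.sk2 a k z * (D.t : ℝ) / (D.n k : ℝ) else 0)
   else 0)

/-- `μ(z) = Σ_k w_k 1[z∈R_k] Ȳ_k(z) / p_z`. -/
def muHT (a : D.Assign) (z : Fin T) : ℝ :=
  ∑ k, D.w k * (if z ∈ a.1 k then D.Ybar k z else 0) / D.p z

/-- `δ_k(z) = (w_k 1[z∈R_k]/p_z)(Ŷ_k(z) − Ȳ_k(z))`. -/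
def deltak (a : D.Assign) (k : Fin D.K) (z : Fin T) : ℝ :=
  D.w k * (if z ∈ a.1 k then (1 : ℝ) else 0) / D.p z * (D.Yhatk a k z - D.Ybar k z)

/-- `γ̄² = K⁻¹ Σ_k (K w_k)²`. -/
def gambar2 : ℝ := (1 / (D.K : ℝ)) * ∑ k, ((D.K : ℝ) * D.w k) ^ 2

/-- `K⁻¹ Σ_k (K w_k)² Ȳ_k(z)`. -/
def gamYbar (z : Fin T) : ℝ := (1 / (D.K : ℝ)) * ∑ k, ((D.K : ℝ) * D.w k) ^ 2 * D.Ybar k z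

end IBD
/-- Assumption 1 of the paper, for a sequence of designs indexed along `K → ∞`. -/
def Assumption1 {T : ℕ} (D : ℕ → IBD T) (t0 W0 : ℕ)
    (pinf : Fin T → ℝ) (qinf : Fin T → Fin T → ℝ) : Prop :=
  -- the number of blocks tends to infinity
  Tendsto (fun m => ((D m).K : ℝ)) atTop atTop ∧
  -- (i) T is fixed (by the type), t is fixed, and |𝒲| is fixed
  (∀ m, (D m).t = t0) ∧
  (∀ m, (Finset.univ.filter (fun ω : Finset (Fin T) => (D m).r ω ≠ 0)).card = W0) ∧
  -- (ii) K⁻¹ Σ (K w_k)² has a finite limit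
  (∃ C, Tendsto (fun m => (1 / ((D m).K : ℝ)) * ∑ k, (((D m).K : ℝ) * (D m).w k) ^ 2)
    atTop (𝓝 C)) ∧
  -- (iii) p_z → p∞_z ∈ (0,1), q_{z,z'} → q∞_{z,z'} ∈ [0,1)
  (∀ z, Tendsto (fun m => (D m).p z) atTop (𝓝 (pinf z)) ∧ 0 < pinf z ∧ pinf z < 1) ∧
  (∀ z z', Tendsto (fun m => (D m).q z z') atTop (𝓝 (qinf z z')) ∧
    0 ≤ qinf z z' ∧ qinf z z' < 1) ∧
  -- (iv) Ȳ_w and the between-block variances have finite limits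
  (∀ z, ∃ C, Tendsto (fun m => (D m).Ybarw z) atTop (𝓝 C)) ∧
  (∀ z, ∃ C, Tendsto (fun m => (D m).SHT2 z) atTop (𝓝 C)) ∧
  (∀ z z', ∃ C, Tendsto (fun m => (D m).SHT2tau z z') atTop (𝓝 C)) ∧
  (∀ z, ∃ C, Tendsto (fun m => (D m).SHaj2 z) atTop (𝓝 C)) ∧
  (∀ z z', ∃ C, Tendsto (fun m => (D m).SHaj2tau z z') atTop (𝓝 C)) ∧
  -- (v) weighted averages of within-block variances have finite limits
  (∀ z, ∃ C, Tendsto (fun m => (1 / ((D m).K : ℝ)) *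
    ∑ k, (((D m).K : ℝ) * (D m).w k) ^ 2 * (D m).Sk2 k z / ((D m).n k : ℝ))
      atTop (𝓝 C)) ∧
  (∀ z z', ∃ C, Tendsto (fun m => (1 / ((D m).K : ℝ)) *
    ∑ k, (((D m).K : ℝ) * (D m).w k) ^ 2 * (D m).Sk2tau k z z' / ((D m).n k : ℝ))
      atTop (𝓝 C)) ∧
  -- (vi) max_k K⁻¹ (K w_k Ȳ_k(z) − Ȳ(z;w))² → 0
  (∀ z, ∀ ε : ℝ, 0 < ε → ∃ M, ∀ m ≥ M, ∀ k : Fin (D m).K,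
    (1 / ((D m).K : ℝ)) * (((D m).K : ℝ) * (D m).w k * (D m).Ybar k z - (D m).Ybarw z) ^ 2
      < ε) ∧
  -- (vii) fourth-moment condition
  (∀ z, Tendsto (fun m => (((D m).K : ℝ)) ^ 2 *
    ∑ k, ((D m).w k) ^ 4 * (1 / ((D m).n k : ℝ)) * ∑ i ∈ (D m).blk k, (D m).Y i z ^ 4)
      atTop (𝓝 0))

/-- A sequence of random variables on the designs' assignment spaces converges
in probability to the (deterministic) sequence `c`. -/
def TendstoP {T : ℕ} (D : ℕ → IBD T) (X : ∀ m, (D m).Assign → ℝ) (c : ℕ → ℝ) : Prop :=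
  ∀ ε : ℝ, 0 < ε →
    Tendsto (fun m => fpr (D m).Omega (fun a => ε < |X m a - c m|)) atTop (𝓝 0)

/-- `ν` is the centered multivariate Gaussian distribution on `Fin T → ℝ` with covariance
matrix `S`: every linear functional of it is a centered real Gaussian with the induced
variance. -/
def IsGaussianVec {T : ℕ} (ν : Measure (Fin T → ℝ)) (S : Fin T → Fin T → ℝ) : Prop :=
  ∀ c : Fin T → ℝ,
    ν.map (fun x => ∑ z, c z * x z) =
      ProbabilityTheory.gaussianReal 0 (Real.toNNReal (∑ z, ∑ z', c z * S z z' * c z'))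

/-- A sequence of random vectors on the designs' assignment spaces converges in
distribution to the law `ν` (tested against bounded continuous functions). -/
def TendstoD {T : ℕ} (D : ℕ → IBD T) (X : ∀ m, (D m).Assign → (Fin T → ℝ))
    (ν : Measure (Fin T → ℝ)) : Prop :=
  ∀ f : BoundedContinuousFunction (Fin T → ℝ) ℝ,
    Tendsto (fun m => fexp (D m).Omega (fun a => f (X m a))) atTop (𝓝 (∫ x, f x ∂ν))

/-- A sequence of real random variables on the designs' assignment spaces converges in
distribution to the law `ν`. -/
def TendstoD1 {T : ℕ} (D : ℕ → IBD T) (X : ∀ m, (D m).Assign → ℝ) (ν : Measure ℝ) : Prop :=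
  ∀ f : BoundedContinuousFunction ℝ ℝ,
    Tendsto (fun m => fexp (D m).Omega (fun a => f (X m a))) atTop (𝓝 (∫ x, f x ∂ν))
namespace IBD

variable {T : ℕ} (D : IBD T)

/-- Block-level average `Ȳ(z) = K⁻¹ Σ_k Ȳ_k(z)`. -/
def Ybarb (z : Fin T) : ℝ := (∑ k, D.Ybar k z) / (D.K : ℝ)

/-- Between-block variance `S_bb²(z)` (equal block weights). -/
def Sbb2 (z : Fin T) : ℝ := (∑ k, (D.Ybar k z - D.Ybarb z) ^ 2) / ((D.K : ℝ) - 1)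

/-- Between-block heterogeneity `S_bb²(τ(z,z'))` (equal block weights). -/
def Sbb2tau (z z' : Fin T) : ℝ :=
  (∑ k, (D.Ybar k z - D.Ybar k z' - (D.Ybarb z - D.Ybarb z')) ^ 2) / ((D.K : ℝ) - 1)

/-- Adjusted observed block mean `Ŷ_k^{adj}(z)`. -/
def Yadjk (a : D.Assign) (k : Fin D.K) (z : Fin T) : ℝ :=
  if z ∈ a.1 k then
    D.Yhatk a k z - (1 / (D.t : ℝ)) * ∑ z' ∈ a.1 k, D.Yhatk a k z'
  else 0

/-- `Ŷ^{adj}(z) = Σ_k Ŷ_k^{adj}(z)`. -/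
def Yadj (a : D.Assign) (z : Fin T) : ℝ := ∑ k, D.Yadjk a k z

/-- The adjusted (block-effect corrected) estimator `τ̂^{BIBD-adj}(z₁,z₂)`. -/
def tauadj (a : D.Assign) (z1 z2 : Fin T) : ℝ :=
  ((D.t : ℝ) / ((D.lcount z1 z2 : ℝ) * (T : ℝ))) * (D.Yadj a z1 - D.Yadj a z2)

/-- `𝒲_{z̃}`: the treatment subsets of the design containing `z1` but not `z2`. -/
def Wsets (z1 z2 : Fin T) : Finset (Finset (Fin T)) :=
  Finset.univ.filter (fun ω : Finset (Fin T) => D.r ω ≠ 0 ∧ z1 ∈ ω ∧ z2 ∉ ω)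

/-- `S_k²(τ(z̃,ω))`. -/
def Sk2tauSet (k : Fin D.K) (zt : Fin T) (ω : Finset (Fin T)) : ℝ :=
  (∑ i ∈ D.blk k,
      (D.Y i zt - (1 / ((D.t : ℝ) - 1)) * (∑ z ∈ ω.erase zt, D.Y i z) -
        (D.Ybar k zt - (1 / ((D.t : ℝ) - 1)) * (∑ z ∈ ω.erase zt, D.Ybar k z))) ^ 2) /
    ((D.n k : ℝ) - 1)

/-- `S_bb²(τ(z̃,ω))`. -/
def Sbb2tauSet (zt : Fin T) (ω : Finset (Fin T)) : ℝ :=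
  (∑ k,
      (D.Ybar k zt - (1 / ((D.t : ℝ) - 1)) * (∑ z ∈ ω.erase zt, D.Ybar k z) -
        (D.Ybarb zt - (1 / ((D.t : ℝ) - 1)) * (∑ z ∈ ω.erase zt, D.Ybarb z))) ^ 2) /
    ((D.K : ℝ) - 1)

/-- `S̄_k²(𝒲_{z̃})`. -/
def SbarkW (k : Fin D.K) (z1 z2 : Fin T) : ℝ :=
  (1 / ((D.Wsets z1 z2).card : ℝ)) *
    ∑ ω ∈ D.Wsets z1 z2, ∑ z ∈ ω.erase z1, (1 / ((D.t : ℝ) - 1)) * D.Sk2 k z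

/-- `S̄_k²(τ(z̃,𝒲_{z̃}))`. -/
def SbarktauW (k : Fin D.K) (z1 z2 : Fin T) : ℝ :=
  (1 / ((D.Wsets z1 z2).card : ℝ)) * ∑ ω ∈ D.Wsets z1 z2, D.Sk2tauSet k z1 ω

/-- `S̄_bb²(τ(z̃,𝒲_{z̃}))`. -/
def SbarbbtauW (z1 z2 : Fin T) : ℝ :=
  (1 / ((D.Wsets z1 z2).card : ℝ)) * ∑ ω ∈ D.Wsets z1 z2, D.Sbb2tauSet z1 ω

/-- `V̄_k(z̃)`. -/
def Vbark (k : Fin D.K) (z1 z2 : Fin T) : ℝ :=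
  (D.t : ℝ) * D.Sk2 k z1 / (D.n k : ℝ) +
    (1 / ((D.t : ℝ) - 1)) * ((D.t : ℝ) * D.SbarkW k z1 z2 / (D.n k : ℝ)) -
    D.SbarktauW k z1 z2 / (D.n k : ℝ)

/-- `V_k(z₁,z₂)`. -/
def Vk (k : Fin D.K) (z1 z2 : Fin T) : ℝ :=
  (D.t : ℝ) * D.Sk2 k z1 / (D.n k : ℝ) + (D.t : ℝ) * D.Sk2 k z2 / (D.n k : ℝ) -
    D.Sk2tau k z1 z2 / (D.n k : ℝ)

/-- Conditional inclusion probability `p(z) = P(z∈R_k | z₁∈R_k, z₂∉R_k)`. -/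
def pcond (z1 z2 z : Fin T) : ℝ :=
  ((∑ ω ∈ Finset.univ.filter
      (fun ω : Finset (Fin T) => z1 ∈ ω ∧ z2 ∉ ω ∧ z ∈ ω), D.r ω : ℕ) : ℝ) /
    ((D.Lcount z1 : ℝ) - (D.lcount z1 z2 : ℝ))

/-- Conditional pairwise inclusion probability `p_{z̃}(z,z')`. -/
def pcond2 (z1 z2 z z' : Fin T) : ℝ :=
  ((∑ ω ∈ Finset.univ.filter
      (fun ω : Finset (Fin T) => z1 ∈ ω ∧ z2 ∉ ω ∧ z ∈ ω ∧ z' ∈ ω), D.r ω : ℕ) : ℝ) /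
    ((D.Lcount z1 : ℝ) - (D.lcount z1 z2 : ℝ))

/-- Unweighted `Ŷ_A(z)` for the pair `(z,z')` (equal block weights `1/K`). -/
def YhatAu (a : D.Assign) (z z' : Fin T) : ℝ :=
  (∑ k, if z ∈ a.1 k ∧ z' ∈ a.1 k then D.Yhatk a k z else 0) / (D.lcount z z' : ℝ)

/-- Sample between-block heterogeneity `s_bb²(τ(z,z'))` (equal block weights). -/
def sbb2tau (a : D.Assign) (z z' : Fin T) : ℝ :=
  (∑ k, if z ∈ a.1 k ∧ z' ∈ a.1 k then
      (D.Yhatk a k z - D.Yhatk a k z' - (D.YhatAu a z z' - D.YhatAu a z' z)) ^ 2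
    else 0) / ((D.lcount z z' : ℝ) - 1)

/-- `s̄_bb²(τ(z̃,𝒲_{z̃}))`. -/
def sbarbb (a : D.Assign) (z1 z2 : Fin T) : ℝ :=
  (∑ z ∈ ({z1, z2} : Finset (Fin T))ᶜ,
      (D.pcond z1 z2 z / ((D.t : ℝ) - 1)) * D.sbb2tau a z1 z) -
  (∑ z ∈ ({z1, z2} : Finset (Fin T))ᶜ, ∑ z' ∈ ({z1, z2} : Finset (Fin T))ᶜ,
      if z ≠ z' then (D.pcond2 z1 z2 z z' / (2 * ((D.t : ℝ) - 1) ^ 2)) * D.sbb2tau a z z'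
      else 0)

/-- `σ̃²_bb(z₁,z₂)`. -/
def sigtilde (a : D.Assign) (z1 z2 : Fin T) : ℝ :=
  (1 / (D.K : ℝ)) * (D.sbb2tau a z1 z2 + ((T : ℝ) - 1) * (((D.t : ℝ) - 1) / (D.t : ℝ)) *
    (D.sbarbb a z1 z2 + D.sbarbb a z2 z1))

/-- Variance estimator `σ̂²_{adj-wb}(z₁,z₂)`. -/
def sigadjwb (a : D.Assign) (z1 z2 : Fin T) : ℝ :=
  (((T : ℝ) - (D.t : ℝ)) / ((T : ℝ) * ((D.t : ℝ) - 1))) * D.sigtilde a z1 z2 +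
    (1 / (D.K : ℝ) ^ 2) * ∑ k, (D.sk2 a k z1 + D.sk2 a k z2) * (T : ℝ) / (D.n k : ℝ)

/-- Variance estimator `σ̂²_{adj-bb}(z₁,z₂)`. -/
def sigadjbb (a : D.Assign) (z1 z2 : Fin T) : ℝ :=
  (((T : ℝ) - (D.t : ℝ)) / ((T : ℝ) * ((D.t : ℝ) - 1))) * D.sigtilde a z1 z2 +
    D.sbb2tau a z1 z2 / (D.K : ℝ)

end IBD
section RandomBlocking

/-- All ways to partition the `N` units into `K` blocks of prescribed sizes `nsz`. -/
def PartOmega (K N : ℕ) (nsz : Fin K → ℕ) : Finset (Fin N → Fin K) :=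
  Finset.univ.filter (fun B => ∀ k, (Finset.univ.filter (fun i => B i = k)).card = nsz k)

/-- Block mean under the blocking `B`. -/
def rbYbar {K N : ℕ} (nsz : Fin K → ℕ) (B : Fin N → Fin K) (Y : Fin N → ℝ) (k : Fin K) : ℝ :=
  (∑ i ∈ Finset.univ.filter (fun i => B i = k), Y i) / (nsz k : ℝ)

/-- Within-block variance `S_k²` under the blocking `B`. -/
def rbSk2 {K N : ℕ} (nsz : Fin K → ℕ) (B : Fin N → Fin K) (Y : Fin N → ℝ) (k : Fin K) : ℝ :=
  (∑ i ∈ Finset.univ.filter (fun i => B i = k), (Y i - rbYbar nsz B Y k) ^ 2) /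
    ((nsz k : ℝ) - 1)

/-- Block-level average `Ỹ` under the blocking `B`. -/
def rbYtilde {K N : ℕ} (nsz : Fin K → ℕ) (B : Fin N → Fin K) (Y : Fin N → ℝ) : ℝ :=
  (∑ k, rbYbar nsz B Y k) / (K : ℝ)

/-- Between-block variance `S_bb²` under the blocking `B`. -/
def rbSbb2 {K N : ℕ} (nsz : Fin K → ℕ) (B : Fin N → Fin K) (Y : Fin N → ℝ) : ℝ :=
  (∑ k, (rbYbar nsz B Y k - rbYtilde nsz B Y) ^ 2) / ((K : ℝ) - 1)

/-- Population variance `S²`. -/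
def popVar (N : ℕ) (Y : Fin N → ℝ) : ℝ :=
  (∑ i, (Y i - (∑ j, Y j) / (N : ℝ)) ^ 2) / ((N : ℝ) - 1)

end RandomBlocking

section Thm4Aux

namespace IBD

variable {T : ℕ} (D : IBD T)

/-- Valid stage-1 assignments. -/
def RSet4 : Finset (Fin D.K → Finset (Fin T)) := Finset.univ.filter D.ValidR

/-- Valid stage-2 assignments given stage 1. -/
def ZSet4 (R : Fin D.K → Finset (Fin T)) : Finset (Fin D.N → Fin T) :=
  Finset.univ.filter (D.ValidZ R)

lemma sum_omega_eq {M : Type*} [AddCommMonoid M] (F : D.Assign → M) :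
    ∑ a ∈ D.Omega, F a = ∑ R ∈ D.RSet4, ∑ Z ∈ D.ZSet4 R, F (R, Z) := by
  rw [IBD.Omega, Finset.sum_filter, Fintype.sum_prod_type, RSet4, Finset.sum_filter]
  refine Finset.sum_congr rfl fun R _ => ?_
  rw [ZSet4, Finset.sum_filter]
  by_cases hP : D.ValidR R <;> simp [hP]

lemma validR_r_ne {R : Fin D.K → Finset (Fin T)} (hR : D.ValidR R) (k : Fin D.K) :
    D.r (R k) ≠ 0 := by
  intro h0
  have h := hR (R k)
  rw [h0, Finset.card_eq_zero] at h
  have hk : k ∈ Finset.univ.filter (fun k' => R k' = R k) := by simp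
  rw [h] at hk
  exact Finset.notMem_empty k hk

lemma validR_card {R : Fin D.K → Finset (Fin T)} (hR : D.ValidR R) (k : Fin D.K) :
    (R k).card = D.t :=
  D.hrcard _ (D.validR_r_ne hR k)

lemma zmap_mem {R R' : Fin D.K → Finset (Fin T)}
    (pi : Fin D.K → Equiv.Perm (Fin T)) (hpi : ∀ k x, pi k x ∈ R' k ↔ x ∈ R k)
    {Z : Fin D.N → Fin T} (hZ : D.ValidZ R Z) :
    D.ValidZ R' (fun i => pi (D.b i) (Z i)) := by
  obtain ⟨h1, h2⟩ := hZ
  constructor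
  · intro i
    exact (hpi (D.b i) (Z i)).2 (h1 i)
  · intro k z hz
    have hy : (pi k).symm z ∈ R k := by
      have := hpi k ((pi k).symm z)
      rw [Equiv.apply_symm_apply] at this
      exact this.1 hz
    rw [← h2 k _ hy]
    congr 1
    apply Finset.filter_congr
    intro i hi
    have hbi : D.b i = k := by simpa [IBD.blk] using hi
    subst hbi
    show (pi (D.b i)) (Z i) = z ↔ Z i = (pi (D.b i)).symm z
    constructor
    · intro h
      rw [← h, Equiv.symm_apply_apply]
    · intro h
      rw [h, Equiv.apply_symm_apply]

lemma ZSet4_card_eq {R R' : Fin D.K → Finset (Fin T)} (hR : D.ValidR R) (hR' : D.ValidR R') :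
    (D.ZSet4 R).card = (D.ZSet4 R').card := by
  have hcard : ∀ k, (R k).card = (R' k).card := fun k => by
    rw [D.validR_card hR, D.validR_card hR']
  have hcard1 : ∀ k, Fintype.card {x // x ∈ R k} = Fintype.card {x // x ∈ R' k} := by
    intro k
    simp only [Fintype.card_coe]
    exact hcard k
  have hcard2 : ∀ k, Fintype.card {x // ¬ x ∈ R k} = Fintype.card {x // ¬ x ∈ R' k} := by
    intro k
    rw [Fintype.card_subtype_compl, Fintype.card_subtype_compl, hcard1 k]
  let e : ∀ k, {x // x ∈ R k} ≃ {x // x ∈ R' k} := fun k => Fintype.equivOfCardEq (hcard1 k)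
  let f : ∀ k, {x // ¬ x ∈ R k} ≃ {x // ¬ x ∈ R' k} := fun k => Fintype.equivOfCardEq (hcard2 k)
  let pi : Fin D.K → Equiv.Perm (Fin T) := fun k => Equiv.subtypeCongr (e k) (f k)
  have happly : ∀ (k) (x) (h : x ∈ R k), pi k x = ↑(e k ⟨x, h⟩) := by
    intro k x h
    simp [pi, Equiv.subtypeCongr, h]
  have happly' : ∀ (k) (x) (h : ¬ x ∈ R k), pi k x = ↑(f k ⟨x, h⟩) := by
    intro k x h
    simp [pi, Equiv.subtypeCongr, h]
  have hpi : ∀ k x, pi k x ∈ R' k ↔ x ∈ R k := by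
    intro k x
    by_cases h : x ∈ R k
    · rw [happly k x h]
      simp only [h, iff_true]
      exact (e k ⟨x, h⟩).2
    · rw [happly' k x h]
      simp only [h, iff_false]
      exact (f k ⟨x, h⟩).2
  have hpi' : ∀ k x, (pi k).symm x ∈ R k ↔ x ∈ R' k := by
    intro k x
    have := hpi k ((pi k).symm x)
    rw [Equiv.apply_symm_apply] at this
    exact this.symm
  apply Finset.card_nbij' (i := fun Z i => pi (D.b i) (Z i))
    (j := fun Z i => (pi (D.b i)).symm (Z i))
  · intro Z hZ
    simp only [ZSet4, Finset.mem_coe, Finset.mem_filter, Finset.mem_univ, true_and] at hZ ⊢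
    exact D.zmap_mem pi hpi hZ
  · intro Z hZ
    simp only [ZSet4, Finset.mem_coe, Finset.mem_filter, Finset.mem_univ, true_and] at hZ ⊢
    exact D.zmap_mem (fun k => (pi k).symm) hpi' hZ
  · intro Z _
    funext i
    simp
  · intro Z _
    funext i
    simp

end IBD

namespace IBD

variable {T : ℕ} (D : IBD T)

lemma count_treat {a : D.Assign} (ha : a ∈ D.Omega) (k : Fin D.K) (z : Fin T) :
    ((D.blk k).filter fun i => a.2 i = z).card = if z ∈ a.1 k then D.n k / D.t else 0 := by
  rw [IBD.Omega, Finset.mem_filter] at ha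
  obtain ⟨-, hR, hZ1, hZ2⟩ := ha
  by_cases hzk : z ∈ a.1 k
  · rw [if_pos hzk]
    exact hZ2 k z hzk
  · rw [if_neg hzk, Finset.card_eq_zero, Finset.filter_eq_empty_iff]
    intro i hi hc
    have hbi : D.b i = k := by simpa [IBD.blk] using hi
    have := hZ1 i
    rw [hbi, hc] at this
    exact hzk this

lemma exch_count {k : Fin D.K} {i j : Fin D.N} (hi : i ∈ D.blk k) (hj : j ∈ D.blk k)
    (P : Finset (Fin T) → Prop) (z : Fin T) :
    (D.Omega.filter fun a => P (a.1 k) ∧ a.2 i = z).card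
      = (D.Omega.filter fun a => P (a.1 k) ∧ a.2 j = z).card := by
  have hb : D.b i = D.b j := by
    simp only [IBD.blk, Finset.mem_filter, Finset.mem_univ, true_and] at hi hj
    rw [hi, hj]
  have hbs : ∀ i', D.b ((Equiv.swap i j) i') = D.b i' := by
    intro i'
    by_cases h1 : i' = i
    · subst h1; rw [Equiv.swap_apply_left, ← hb]
    by_cases h2 : i' = j
    · subst h2; rw [Equiv.swap_apply_right, hb]
    rw [Equiv.swap_apply_of_ne_of_ne h1 h2]
  set σ : Equiv.Perm D.Assign :=
    Equiv.prodCongr (Equiv.refl _) ((Equiv.swap i j).arrowCongr (Equiv.refl _)) with hσdef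
  have hσ1 : ∀ a : D.Assign, (σ a).1 = a.1 := fun a => rfl
  have hσ2 : ∀ (a : D.Assign) (i' : Fin D.N), (σ a).2 i' = a.2 ((Equiv.swap i j) i') := by
    intro a i'
    simp [hσdef, Equiv.arrowCongr, Equiv.symm_swap]
  have hmem : ∀ a : D.Assign, a ∈ D.Omega → σ a ∈ D.Omega := by
    intro a ha
    rw [IBD.Omega, Finset.mem_filter] at ha ⊢
    obtain ⟨-, hR, hZ1, hZ2⟩ := ha
    refine ⟨Finset.mem_univ _, ?_, ?_, ?_⟩
    · rw [hσ1]; exact hR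
    · intro i'
      rw [hσ1, hσ2, ← hbs i']
      exact hZ1 _
    · intro k' z' hz'
      rw [hσ1] at hz'
      have hcards : ((D.blk k').filter fun i' => (σ a).2 i' = z').card
          = ((D.blk k').filter fun i' => a.2 i' = z').card := by
        apply Finset.card_equiv (Equiv.swap i j)
        intro x
        simp only [Finset.mem_filter, IBD.blk, Finset.mem_univ, true_and]
        rw [hσ2 a x, hbs x]
      rw [hcards]
      exact hZ2 k' z' hz'
  have hexp : ∀ x : D.Assign, σ x = (x.1, fun i' => x.2 ((Equiv.swap i j) i')) := by
    intro x
    refine Prod.ext (hσ1 x) ?_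
    funext i'
    exact hσ2 x i'
  have hinv : ∀ a : D.Assign, σ (σ a) = a := by
    intro a
    rw [hexp, hexp]
    refine Prod.ext rfl ?_
    funext i'
    simp [Equiv.swap_apply_self]
  have key : ∀ a, a ∈ D.Omega ↔ σ a ∈ D.Omega := by
    intro a
    refine ⟨hmem a, fun h => ?_⟩
    have := hmem (σ a) h
    rwa [hinv a] at this
  apply Finset.card_equiv σ
  intro a
  simp only [Finset.mem_filter]
  rw [hσ1 a, hσ2 a j, Equiv.swap_apply_right]
  constructor
  · rintro ⟨ha, hp⟩
    exact ⟨(key a).1 ha, hp⟩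
  · rintro ⟨ha, hp⟩
    exact ⟨(key a).2 ha, hp⟩

lemma unit_count (P : Finset (Fin T) → Prop) {k : Fin D.K} {i : Fin D.N} (hi : i ∈ D.blk k)
    (z : Fin T) :
    D.t * (D.Omega.filter fun a => P (a.1 k) ∧ a.2 i = z).card
      = (D.Omega.filter fun a => P (a.1 k) ∧ z ∈ a.1 k).card := by
  have hnt : D.n k / D.t * D.t = D.n k := Nat.div_mul_cancel (D.hdvd k)
  have hn0 : 0 < D.n k := D.hnpos k
  have ht2 := D.ht
  have hnt0 : 0 < D.n k / D.t :=
    Nat.div_pos (Nat.le_of_dvd hn0 (D.hdvd k)) (by omega)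
  have hsum : ∑ j ∈ D.blk k, (D.Omega.filter fun a => P (a.1 k) ∧ a.2 j = z).card
      = (D.n k / D.t) * (D.Omega.filter fun a => P (a.1 k) ∧ z ∈ a.1 k).card := by
    have lhs_eq : ∑ j ∈ D.blk k, (D.Omega.filter fun a => P (a.1 k) ∧ a.2 j = z).card
        = ∑ a ∈ D.Omega, ∑ j ∈ D.blk k, (if P (a.1 k) ∧ a.2 j = z then 1 else 0) := by
      rw [Finset.sum_comm]
      exact Finset.sum_congr rfl fun j _ => Finset.card_filter _ _
    rw [lhs_eq]
    have inner : ∀ a ∈ D.Omega, (∑ j ∈ D.blk k, if P (a.1 k) ∧ a.2 j = z then 1 else 0)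
        = if P (a.1 k) ∧ z ∈ a.1 k then D.n k / D.t else 0 := by
      intro a ha
      by_cases hP : P (a.1 k)
      · simp only [hP, true_and]
        rw [← Finset.card_filter]
        exact D.count_treat ha k z
      · simp [hP]
    rw [Finset.sum_congr rfl inner, ← Finset.sum_filter, Finset.sum_const, smul_eq_mul,
      mul_comm]
  have hconst : ∀ j ∈ D.blk k, (D.Omega.filter fun a => P (a.1 k) ∧ a.2 j = z).card
      = (D.Omega.filter fun a => P (a.1 k) ∧ a.2 i = z).card := fun j hj =>
    D.exch_count hj hi P z
  rw [Finset.sum_congr rfl hconst, Finset.sum_const, smul_eq_mul] at hsum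
  have hmain : (D.n k / D.t) * (D.t * (D.Omega.filter fun a => P (a.1 k) ∧ a.2 i = z).card)
      = (D.n k / D.t) * (D.Omega.filter fun a => P (a.1 k) ∧ z ∈ a.1 k).card := by
    rw [← mul_assoc, hnt]
    simpa only [IBD.n] using hsum
  exact Nat.eq_of_mul_eq_mul_left hnt0 hmain

lemma stage1_count (P : Finset (Fin T) → Prop) (k : Fin D.K) :
    D.K * (D.Omega.filter fun a => P (a.1 k)).card
      = D.Omega.card * ∑ ω ∈ Finset.univ.filter P, D.r ω := by
  have hfib : ∀ k' : Fin D.K, (D.Omega.filter fun a => P (a.1 k')).card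
      = ∑ R ∈ D.RSet4, if P (R k') then (D.ZSet4 R).card else 0 := by
    intro k'
    rw [Finset.card_filter, D.sum_omega_eq (fun a => if P (a.1 k') then 1 else 0)]
    refine Finset.sum_congr rfl fun R _ => ?_
    by_cases hP : P (R k')
    · rw [if_pos hP, Finset.card_eq_sum_ones]
      exact Finset.sum_congr rfl fun Z _ => if_pos hP
    · rw [if_neg hP]
      exact Finset.sum_eq_zero fun Z _ => if_neg hP
  have hΩ : D.Omega.card = ∑ R ∈ D.RSet4, (D.ZSet4 R).card := by
    rw [Finset.card_eq_sum_ones, D.sum_omega_eq (fun _ => 1)]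
    exact Finset.sum_congr rfl fun R _ => (Finset.card_eq_sum_ones _).symm
  have hval : ∀ (k' : Fin D.K) (R : Fin D.K → Finset (Fin T)), D.ValidR R →
      D.ValidR (R ∘ (Equiv.swap k k')) := by
    intro k' R hR ω
    have h0 : (Finset.univ.filter fun k0 => (R ∘ (Equiv.swap k k')) k0 = ω).card
        = (Finset.univ.filter fun k0 => R k0 = ω).card := by
      apply Finset.card_equiv (Equiv.swap k k')
      intro x
      simp only [Finset.mem_filter, Finset.mem_univ, true_and, Function.comp]
    rw [h0]
    exact hR ω
  have hind : ∀ k' : Fin D.K,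
      (∑ R ∈ D.RSet4, if P (R k') then (D.ZSet4 R).card else 0)
        = ∑ R ∈ D.RSet4, if P (R k) then (D.ZSet4 R).card else 0 := by
    intro k'
    refine Finset.sum_nbij' (i := fun R => R ∘ (Equiv.swap k k'))
      (j := fun R => R ∘ (Equiv.swap k k')) ?_ ?_ ?_ ?_ ?_
    · intro R hR
      simp only [RSet4, Finset.mem_filter, Finset.mem_univ, true_and] at hR ⊢
      exact hval k' R hR
    · intro R hR
      simp only [RSet4, Finset.mem_filter, Finset.mem_univ, true_and] at hR ⊢
      exact hval k' R hR
    · intro R _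
      funext k0
      simp [Equiv.swap_apply_self]
    · intro R _
      funext k0
      simp [Equiv.swap_apply_self]
    · intro R hR
      simp only [RSet4, Finset.mem_filter, Finset.mem_univ, true_and] at hR
      have h1 : (R ∘ (Equiv.swap k k')) k = R k' := by simp
      have h2 : (D.ZSet4 (R ∘ (Equiv.swap k k'))).card = (D.ZSet4 R).card :=
        D.ZSet4_card_eq (hval k' R hR) hR
      show (if P (R k') then (D.ZSet4 R).card else 0)
          = if P ((R ∘ (Equiv.swap k k')) k) then (D.ZSet4 (R ∘ (Equiv.swap k k'))).card else 0
      rw [h1, h2]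
  have hcnt : ∀ R, D.ValidR R →
      (Finset.univ.filter fun k' => P (R k')).card = ∑ ω ∈ Finset.univ.filter P, D.r ω := by
    intro R hR
    rw [Finset.card_eq_sum_card_fiberwise
      (f := R) (t := Finset.univ.filter P) (fun k' hk' => by
        simp only [Finset.mem_coe, Finset.mem_filter, Finset.mem_univ, true_and] at hk' ⊢
        exact hk')]
    refine Finset.sum_congr rfl fun ω hω => ?_
    simp only [Finset.mem_filter, Finset.mem_univ, true_and] at hω
    rw [Finset.filter_filter, ← hR ω]
    congr 1
    apply Finset.filter_congr
    intro k' _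
    exact ⟨fun h => h.2, fun h => ⟨by rw [h]; exact hω, h⟩⟩
  calc D.K * (D.Omega.filter fun a => P (a.1 k)).card
      = ∑ _k' : Fin D.K, (∑ R ∈ D.RSet4, if P (R k) then (D.ZSet4 R).card else 0) := by
        rw [Finset.sum_const, Finset.card_univ, Fintype.card_fin, smul_eq_mul, hfib k]
    _ = ∑ k' : Fin D.K, (∑ R ∈ D.RSet4, if P (R k') then (D.ZSet4 R).card else 0) :=
        Finset.sum_congr rfl fun k' _ => (hind k').symm
    _ = ∑ R ∈ D.RSet4, (D.ZSet4 R).card * (Finset.univ.filter fun k' => P (R k')).card := by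
        rw [Finset.sum_comm]
        refine Finset.sum_congr rfl fun R _ => ?_
        rw [Finset.card_filter, Finset.mul_sum]
        refine Finset.sum_congr rfl fun k' _ => ?_
        by_cases hP : P (R k') <;> simp [hP]
    _ = ∑ R ∈ D.RSet4, (D.ZSet4 R).card * ∑ ω ∈ Finset.univ.filter P, D.r ω := by
        refine Finset.sum_congr rfl fun R hR => ?_
        simp only [RSet4, Finset.mem_filter, Finset.mem_univ, true_and] at hR
        rw [hcnt R hR]
    _ = D.Omega.card * ∑ ω ∈ Finset.univ.filter P, D.r ω := by
        rw [hΩ, Finset.sum_mul]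

lemma Yhatk_eq {a : D.Assign} (ha : a ∈ D.Omega) (k : Fin D.K) (z : Fin T) :
    D.Yhatk a k z
      = ((D.t : ℝ) / (D.n k : ℝ)) * ∑ i ∈ D.blk k, (if a.2 i = z then D.Y i z else 0) := by
  by_cases hzk : z ∈ a.1 k
  · rw [IBD.Yhatk, if_pos hzk, ← Finset.sum_filter, div_div_eq_mul_div]
    ring
  · rw [IBD.Yhatk, if_neg hzk]
    rw [IBD.Omega, Finset.mem_filter] at ha
    obtain ⟨-, hR, hZ1, hZ2⟩ := ha
    have hzero : ∀ i ∈ D.blk k, (if a.2 i = z then D.Y i z else 0) = 0 := by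
      intro i hi
      rw [if_neg]
      intro hc
      have hbi : D.b i = k := by simpa [IBD.blk] using hi
      have := hZ1 i
      rw [hbi, hc] at this
      exact hzk this
    rw [Finset.sum_eq_zero hzero, mul_zero]

lemma Esum (P : Finset (Fin T) → Prop) (k : Fin D.K) (z' : Fin T) :
    (D.K : ℝ) * ∑ a ∈ D.Omega, (if P (a.1 k) then D.Yhatk a k z' else 0)
      = (D.Omega.card : ℝ) * ((∑ ω ∈ Finset.univ.filter (fun ω => P ω ∧ z' ∈ ω), D.r ω : ℕ) : ℝ)
          * D.Ybar k z' := by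
  set S : ℝ := ((∑ ω ∈ Finset.univ.filter (fun ω => P ω ∧ z' ∈ ω), D.r ω : ℕ) : ℝ) with hS
  set ci : Fin D.N → ℝ :=
    fun i => ((D.Omega.filter fun a => P (a.1 k) ∧ a.2 i = z').card : ℝ) with hci
  have step1 : ∑ a ∈ D.Omega, (if P (a.1 k) then D.Yhatk a k z' else 0)
      = ((D.t : ℝ) / (D.n k : ℝ)) * ∑ i ∈ D.blk k, D.Y i z' * ci i := by
    have hcg : ∀ a ∈ D.Omega, (if P (a.1 k) then D.Yhatk a k z' else 0)
        = ((D.t : ℝ) / (D.n k : ℝ)) * ∑ i ∈ D.blk k,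
            (if P (a.1 k) ∧ a.2 i = z' then D.Y i z' else 0) := by
      intro a ha
      by_cases hP : P (a.1 k)
      · rw [if_pos hP, D.Yhatk_eq ha k z']
        simp only [hP, true_and]
      · simp [hP]
    rw [Finset.sum_congr rfl hcg, ← Finset.mul_sum]
    congr 1
    rw [Finset.sum_comm]
    refine Finset.sum_congr rfl fun i _ => ?_
    rw [hci]
    simp only
    rw [Finset.card_filter]
    push_cast
    rw [Finset.mul_sum]
    refine Finset.sum_congr rfl fun a _ => ?_
    by_cases h : P (a.1 k) ∧ a.2 i = z' <;> simp [h]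
  have step2 : ∀ i ∈ D.blk k,
      (D.K : ℝ) * (D.t : ℝ) * ci i = (D.Omega.card : ℝ) * S := by
    intro i hi
    have h3 : D.K * (D.t * (D.Omega.filter fun a => P (a.1 k) ∧ a.2 i = z').card)
        = D.Omega.card * ∑ ω ∈ Finset.univ.filter (fun ω => P ω ∧ z' ∈ ω), D.r ω := by
      rw [D.unit_count P hi z']
      have h2 := D.stage1_count (fun ω => P ω ∧ z' ∈ ω) k
      convert h2 using 4
    have h4 := congrArg (Nat.cast : ℕ → ℝ) h3
    push_cast at h4
    rw [hci, hS]
    push_cast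
    linarith [h4]
  have hsum : (D.K : ℝ) * (D.t : ℝ) * ∑ i ∈ D.blk k, D.Y i z' * ci i
      = ((D.Omega.card : ℝ) * S) * ∑ i ∈ D.blk k, D.Y i z' := by
    rw [Finset.mul_sum, Finset.mul_sum]
    refine Finset.sum_congr rfl fun i hi => ?_
    linear_combination (D.Y i z') * step2 i hi
  rw [step1, IBD.Ybar]
  calc (D.K : ℝ) * ((D.t : ℝ) / (D.n k : ℝ) * ∑ i ∈ D.blk k, D.Y i z' * ci i)
      = ((D.K : ℝ) * (D.t : ℝ) * ∑ i ∈ D.blk k, D.Y i z' * ci i) / (D.n k : ℝ) := by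
        ring
    _ = (((D.Omega.card : ℝ) * S) * ∑ i ∈ D.blk k, D.Y i z') / (D.n k : ℝ) := by
        rw [hsum]
    _ = (D.Omega.card : ℝ) * S * ((∑ i ∈ D.blk k, D.Y i z') / (D.n k : ℝ)) := by
        ring

lemma EsumM (z : Fin T) (k : Fin D.K) (z' : Fin T) :
    (D.K : ℝ) * ∑ a ∈ D.Omega, (if z ∈ a.1 k then D.Yhatk a k z' else 0)
      = (D.Omega.card : ℝ) * (D.lcount z z' : ℝ) * D.Ybar k z' := by
  have h := D.Esum (fun ω => z ∈ ω) k z'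
  convert h using 2
  · refine Finset.sum_congr rfl fun a _ => ?_
    by_cases hzk : z ∈ a.1 k <;> simp [hzk]
  · congr 1
    rw [IBD.lcount]
    norm_cast
    apply Finset.sum_congr _ (fun _ _ => rfl)
    ext ω
    simp

lemma EsumT (k : Fin D.K) (z' : Fin T) :
    (D.K : ℝ) * ∑ a ∈ D.Omega, D.Yhatk a k z'
      = (D.Omega.card : ℝ) * (D.Lcount z' : ℝ) * D.Ybar k z' := by
  have h := D.Esum (fun _ => True) k z'
  convert h using 2
  · exact Finset.sum_congr rfl fun a _ => (if_pos trivial).symm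
  · congr 1
    rw [IBD.Lcount]
    norm_cast
    apply Finset.sum_congr _ (fun _ _ => rfl)
    ext ω
    simp

lemma Yadjk_eq (a : D.Assign) (k : Fin D.K) (z : Fin T) :
    D.Yadjk a k z = D.Yhatk a k z
      - (1 / (D.t : ℝ)) * ∑ z' : Fin T, (if z ∈ a.1 k then D.Yhatk a k z' else 0) := by
  by_cases hzk : z ∈ a.1 k
  · rw [IBD.Yadjk, if_pos hzk]
    have hs : ∑ z' ∈ a.1 k, D.Yhatk a k z'
        = ∑ z' : Fin T, (if z ∈ a.1 k then D.Yhatk a k z' else 0) := by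
      simp only [hzk, if_true]
      exact Finset.sum_subset (Finset.subset_univ _)
        (fun x _ hx => by rw [IBD.Yhatk, if_neg hx])
    rw [hs]
  · rw [IBD.Yadjk, if_neg hzk]
    have hz0 : D.Yhatk a k z = 0 := by rw [IBD.Yhatk, if_neg hzk]
    simp [hz0, hzk]

end IBD

end Thm4Aux
/-- **Theorem 4.** Under a BIBD, the adjusted (block-effect corrected) estimator is
unbiased for the block-level pairwise contrast: `E[τ̂^{BIBD-adj}(z₁,z₂)] = Ȳ(z₁) − Ȳ(z₂)`. -/
theorem bibd_adjusted_estimator_unbiased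
    {T : ℕ} (D : IBD T) (Lval lval : ℕ) (hLpos : 0 < Lval)
    (hBL : ∀ z, D.Lcount z = Lval)
    (hBl : ∀ z z', z ≠ z' → D.lcount z z' = lval)
    (hBr : ∀ ω ω', D.r ω ≠ 0 → D.r ω' ≠ 0 → D.r ω = D.r ω')
    (hne : D.Omega.Nonempty)
    (z1 z2 : Fin T) (hz : z1 ≠ z2) :
    fexp D.Omega (fun a => D.tauadj a z1 z2) = D.Ybarb z1 - D.Ybarb z2 := by
  classical
  have hT0 : 0 < T := Fin.pos z1
  have ht2 := D.ht
  have hK0 := D.hK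
  have htT := D.htT
  have hΩ0 : 0 < D.Omega.card := Finset.card_pos.mpr hne
  have hKne : (D.K : ℝ) ≠ 0 := by positivity
  have htne : (D.t : ℝ) ≠ 0 := by positivity
  have hTne : (T : ℝ) ≠ 0 := by positivity
  have hΩne : (D.Omega.card : ℝ) ≠ 0 := by positivity
  -- lcount z z = Lcount z
  have hlz : ∀ z : Fin T, D.lcount z z = D.Lcount z := by
    intro z
    rw [IBD.lcount, IBD.Lcount]
    apply Finset.sum_congr _ (fun _ _ => rfl)
    ext ω
    simp
  -- row-sum identity  ∑_{z'≠z} l_{z z'} = (t-1) L_z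
  have hsuml : ∀ z : Fin T, ∑ z' ∈ Finset.univ.erase z, D.lcount z z'
      = (D.t - 1) * D.Lcount z := by
    intro z
    have expand : ∀ z' : Fin T, D.lcount z z'
        = ∑ ω : Finset (Fin T), if z ∈ ω ∧ z' ∈ ω then D.r ω else 0 := by
      intro z'
      rw [IBD.lcount, Finset.sum_filter]
    rw [Finset.sum_congr rfl (fun z' _ => expand z'), Finset.sum_comm]
    have inner : ∀ ω : Finset (Fin T),
        (∑ z' ∈ Finset.univ.erase z, if z ∈ ω ∧ z' ∈ ω then D.r ω else 0)
          = if z ∈ ω then (ω.erase z).card * D.r ω else 0 := by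
      intro ω
      by_cases hzω : z ∈ ω
      · rw [if_pos hzω]
        simp only [hzω, true_and]
        rw [← Finset.sum_filter]
        have hset : (Finset.univ.erase z).filter (fun z' => z' ∈ ω) = ω.erase z := by
          ext z'
          simp [Finset.mem_erase, and_comm]
        rw [hset, Finset.sum_const, smul_eq_mul]
      · simp [hzω]
    rw [Finset.sum_congr rfl (fun ω _ => inner ω)]
    have inner2 : ∀ ω : Finset (Fin T),
        (if z ∈ ω then (ω.erase z).card * D.r ω else 0)
          = (D.t - 1) * (if z ∈ ω then D.r ω else 0) := by
      intro ω
      by_cases hzω : z ∈ ω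
      · rw [if_pos hzω, if_pos hzω]
        by_cases hr : D.r ω = 0
        · rw [hr, mul_zero, mul_zero]
        · rw [Finset.card_erase_of_mem hzω, D.hrcard ω hr]
      · simp [hzω]
    rw [Finset.sum_congr rfl (fun ω _ => inner2 ω), ← Finset.mul_sum]
    congr 1
    rw [IBD.Lcount, Finset.sum_filter]
  -- BIBD relation (T-1) l = (t-1) L
  have hTl : (T - 1) * lval = (D.t - 1) * Lval := by
    have h := hsuml z1
    rw [hBL z1] at h
    have hconst : ∀ z' ∈ Finset.univ.erase z1, D.lcount z1 z' = lval := by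
      intro z' hz'
      exact hBl z1 z' (Ne.symm (Finset.mem_erase.mp hz').1)
    rw [Finset.sum_congr rfl hconst, Finset.sum_const, smul_eq_mul,
      Finset.card_erase_of_mem (Finset.mem_univ z1), Finset.card_univ,
      Fintype.card_fin] at h
    exact h
  have hl0 : 0 < lval := by
    have h1 : 0 < (D.t - 1) * Lval := Nat.mul_pos (by omega) hLpos
    rw [← hTl] at h1
    rcases Nat.eq_zero_or_pos lval with h | h
    · rw [h, mul_zero] at h1
      exact absurd h1 (lt_irrefl 0)
    · exact h
  have hlne : (lval : ℝ) ≠ 0 := by positivity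
  have hlT : (Lval : ℝ) * ((D.t : ℝ) - 1) + (lval : ℝ) = (lval : ℝ) * (T : ℝ) := by
    have hc := congrArg (Nat.cast : ℕ → ℝ) hTl
    push_cast [Nat.cast_sub (by omega : 1 ≤ T), Nat.cast_sub (by omega : 1 ≤ D.t)] at hc
    linarith [hc]
  -- expectation of adjusted block estimator
  have hAk : ∀ (k : Fin D.K) (z : Fin T),
      (D.K : ℝ) * ∑ a ∈ D.Omega, D.Yadjk a k z
        = (D.Omega.card : ℝ) * (D.Lcount z : ℝ) * D.Ybar k z
          - (1 / (D.t : ℝ)) * ∑ z' : Fin T,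
              (D.Omega.card : ℝ) * (D.lcount z z' : ℝ) * D.Ybar k z' := by
    intro k z
    have e1 : ∑ a ∈ D.Omega, D.Yadjk a k z
        = (∑ a ∈ D.Omega, D.Yhatk a k z)
          - (1 / (D.t : ℝ)) * ∑ z' : Fin T,
              ∑ a ∈ D.Omega, (if z ∈ a.1 k then D.Yhatk a k z' else 0) := by
      rw [Finset.sum_congr rfl (fun a _ => D.Yadjk_eq a k z), Finset.sum_sub_distrib]
      congr 1
      rw [← Finset.mul_sum]
      congr 1
      rw [Finset.sum_comm]
    rw [e1, mul_sub, D.EsumT k z]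
    congr 1
    have h2 : ∑ z' : Fin T,
        (D.K : ℝ) * (∑ a ∈ D.Omega, (if z ∈ a.1 k then D.Yhatk a k z' else 0))
        = ∑ z' : Fin T, (D.Omega.card : ℝ) * (D.lcount z z' : ℝ) * D.Ybar k z' :=
      Finset.sum_congr rfl fun z' _ => D.EsumM z k z'
    rw [← h2, ← Finset.mul_sum]
    ring
  have hfin : (D.K : ℝ) * ∑ a ∈ D.Omega, (D.Yadj a z1 - D.Yadj a z2)
      = (D.Omega.card : ℝ) * ((lval : ℝ) * (T : ℝ) / (D.t : ℝ))
          * ∑ k, (D.Ybar k z1 - D.Ybar k z2) := by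
    have hsplit : ∀ z : Fin T, ∑ a ∈ D.Omega, D.Yadj a z
        = ∑ k, ∑ a ∈ D.Omega, D.Yadjk a k z := by
      intro z
      simp only [IBD.Yadj]
      exact Finset.sum_comm
    rw [Finset.sum_sub_distrib, hsplit z1, hsplit z2, ← Finset.sum_sub_distrib,
      Finset.mul_sum, Finset.mul_sum]
    refine Finset.sum_congr rfl fun k _ => ?_
    rw [mul_sub, hAk k z1, hAk k z2, hBL z1, hBL z2]
    have hs1 : (∑ z' : Fin T, (D.Omega.card : ℝ) * (D.lcount z1 z' : ℝ) * D.Ybar k z')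
        - (∑ z' : Fin T, (D.Omega.card : ℝ) * (D.lcount z2 z' : ℝ) * D.Ybar k z')
        = (D.Omega.card : ℝ) * ((Lval : ℝ) - (lval : ℝ))
            * (D.Ybar k z1 - D.Ybar k z2) := by
      rw [← Finset.sum_sub_distrib]
      have hterm : ∀ z' : Fin T,
          (D.Omega.card : ℝ) * (D.lcount z1 z' : ℝ) * D.Ybar k z'
            - (D.Omega.card : ℝ) * (D.lcount z2 z' : ℝ) * D.Ybar k z'
          = (if z' = z1 then (D.Omega.card : ℝ) * ((Lval : ℝ) - (lval : ℝ)) * D.Ybar k z1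
             else if z' = z2 then
               (D.Omega.card : ℝ) * ((lval : ℝ) - (Lval : ℝ)) * D.Ybar k z2
             else 0) := by
        intro z'
        by_cases h1 : z' = z1
        · subst h1
          rw [if_pos rfl, hlz z', hBL z', hBl z2 z' (fun h => hz h.symm)]
          ring
        · by_cases h2 : z' = z2
          · subst h2
            rw [if_neg h1, if_pos rfl, hlz z', hBL z', hBl z1 z' (fun h => h1 h.symm)]
            ring
          · rw [if_neg h1, if_neg h2, hBl z1 z' (fun h => h1 h.symm),
              hBl z2 z' (fun h => h2 h.symm)]
            ring
      rw [Finset.sum_congr rfl (fun z' _ => hterm z')]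
      have hsupp : ∀ z' ∈ Finset.univ, z' ∉ ({z1, z2} : Finset (Fin T)) →
          (if z' = z1 then (D.Omega.card : ℝ) * ((Lval : ℝ) - (lval : ℝ)) * D.Ybar k z1
           else if z' = z2 then
             (D.Omega.card : ℝ) * ((lval : ℝ) - (Lval : ℝ)) * D.Ybar k z2
           else 0) = 0 := by
        intro z' _ hz'
        simp only [Finset.mem_insert, Finset.mem_singleton] at hz'
        push_neg at hz'
        rw [if_neg hz'.1, if_neg hz'.2]
      rw [← Finset.sum_subset (Finset.subset_univ ({z1, z2} : Finset (Fin T))) hsupp,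
        Finset.sum_pair hz]
      rw [if_pos rfl, if_neg hz.symm, if_pos rfl]
      ring
    field_simp
    linear_combination (-(1 : ℝ)) * hs1
      + ((D.Omega.card : ℝ) * (D.Ybar k z1 - D.Ybar k z2)) * hlT
  -- conclude
  have htau : ∀ a ∈ D.Omega, D.tauadj a z1 z2
      = ((D.t : ℝ) / ((lval : ℝ) * (T : ℝ))) * (D.Yadj a z1 - D.Yadj a z2) := by
    intro a _
    rw [IBD.tauadj, hBl z1 z2 hz]
  have hYb : ∑ k, (D.Ybar k z1 - D.Ybar k z2)
      = (D.K : ℝ) * (D.Ybarb z1 - D.Ybarb z2) := by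
    rw [Finset.sum_sub_distrib, IBD.Ybarb, IBD.Ybarb]
    field_simp
  rw [hYb] at hfin
  rw [fexp, Finset.sum_congr rfl htau, ← Finset.mul_sum]
  rw [div_eq_iff hΩne]
  field_simp at hfin ⊢
  have hW : (∑ x ∈ D.Omega, D.Yadj x z1 - ∑ x ∈ D.Omega, D.Yadj x z2) * (D.t : ℝ)
      = (D.Omega.card : ℝ) * ((lval : ℝ) * (T : ℝ)) * (D.Ybarb z1 - D.Ybarb z2) :=
    mul_left_cancel₀ hKne (by rw [← Finset.sum_sub_distrib]; linear_combination (D.K : ℝ) * hfin)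
  rw [Finset.sum_sub_distrib]
  linear_combination hW
end
end

section
/- Suppose the N units are partitioned into K blocks of fixed sizes n_1,…,n_K uniformly at random (each unit equally likely to occupy each position). Then for every treatment z: E[S_k²(z)] = S²(z) for every block k, and E[S_bb²(z)] = (S²(z)/K) Σ_k n_k^{-1}, where S²(z) = (N−1)^{-1} Σ_{i=1}^N (Y_i(z) − Ȳ(z))² is the population variance and Ȳ(z) = N^{-1} Σ_i Y_i(z); consequently K^{-1} Σ_k n_k^{-1} E[S_k²(z)] = E[S_bb²(z)]. (Expectation of variance components under random blocking) -/
open Finset Filter MeasureTheory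
open scoped BigOperators Topology Classical

noncomputable section

section RBAux

-- ====== helper lemmas ======
section RB

lemma sq_mean_pairwise {ι : Type*} (s : Finset ι) (Y : ι → ℝ) (hs : s.Nonempty) :
    ∑ i ∈ s, (Y i - (∑ j ∈ s, Y j) / s.card) ^ 2
      = (∑ i ∈ s, ∑ j ∈ s, (Y i - Y j) ^ 2) / (2 * s.card) := by
  have hn : (s.card : ℝ) ≠ 0 := Nat.cast_ne_zero.mpr hs.card_ne_zero
  have h1 : ∑ i ∈ s, ∑ j ∈ s, (Y i - Y j) ^ 2
      = 2 * s.card * (∑ i ∈ s, Y i ^ 2) - 2 * ((∑ i ∈ s, Y i) * (∑ j ∈ s, Y j)) := by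
    have hrow : ∀ i, ∑ j ∈ s, (Y i - Y j) ^ 2
        = (s.card : ℝ) * Y i ^ 2 - 2 * Y i * (∑ j ∈ s, Y j) + ∑ j ∈ s, Y j ^ 2 := by
      intro i
      rw [Finset.sum_congr rfl (fun j _ => by ring :
        ∀ j ∈ s, (Y i - Y j) ^ 2 = Y i ^ 2 - 2 * Y i * Y j + Y j ^ 2)]
      rw [Finset.sum_add_distrib, Finset.sum_sub_distrib, Finset.sum_const, nsmul_eq_mul,
        ← Finset.mul_sum]
    rw [Finset.sum_congr rfl (fun i _ => hrow i), Finset.sum_add_distrib,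
      Finset.sum_sub_distrib, ← Finset.mul_sum, ← Finset.sum_mul, Finset.sum_const,
      nsmul_eq_mul]
    simp only [← Finset.mul_sum]
    ring
  have h2 : ∑ i ∈ s, (Y i - (∑ j ∈ s, Y j) / s.card) ^ 2
      = (∑ i ∈ s, Y i ^ 2) - (∑ i ∈ s, Y i) ^ 2 / s.card := by
    have hrow : ∀ i, (Y i - (∑ j ∈ s, Y j) / s.card) ^ 2
        = Y i ^ 2 - 2 * Y i * ((∑ j ∈ s, Y j) / s.card)
          + ((∑ j ∈ s, Y j) / s.card) ^ 2 := by intro i; ring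
    rw [Finset.sum_congr rfl (fun i _ => hrow i), Finset.sum_add_distrib,
      Finset.sum_sub_distrib, ← Finset.sum_mul, Finset.sum_const, nsmul_eq_mul]
    field_simp
    simp only [← Finset.mul_sum]
    ring
  rw [h1, h2]
  field_simp

end RB

variable {K N : ℕ} {nsz : Fin K → ℕ}

lemma mem_PartOmega {B : Fin N → Fin K} :
    B ∈ PartOmega K N nsz ↔ ∀ k, (Finset.univ.filter (fun i => B i = k)).card = nsz k := by
  simp [PartOmega]

lemma comp_perm_mem {B : Fin N → Fin K} (σ : Equiv.Perm (Fin N))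
    (hB : B ∈ PartOmega K N nsz) : (fun i => B (σ i)) ∈ PartOmega K N nsz := by
  rw [mem_PartOmega] at *
  intro k
  rw [← hB k]
  apply Finset.card_bij' (fun i _ => σ i) (fun i _ => σ.symm i) <;> simp

lemma exists_perm_pair {α : Type*} [DecidableEq α] {i j i' j' : α}
    (hij : i ≠ j) (h' : i' ≠ j') : ∃ σ : Equiv.Perm α, σ i = i' ∧ σ j = j' := by
  classical
  set σ₁ := Equiv.swap i i' with hσ₁
  have h1 : σ₁ i = i' := Equiv.swap_apply_left _ _
  have hji : σ₁ j ≠ i' := by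
    rw [← h1]; exact fun h => hij ((σ₁.injective h).symm)
  refine ⟨σ₁.trans (Equiv.swap (σ₁ j) j'), ?_, ?_⟩
  · simp only [Equiv.trans_apply, h1]
    exact Equiv.swap_apply_of_ne_of_ne (Ne.symm hji) h'
  · simp only [Equiv.trans_apply]
    exact Equiv.swap_apply_left _ _

lemma filter_comp_perm_card (σ : Equiv.Perm (Fin N)) (q : (Fin N → Fin K) → Prop) :
    ((PartOmega K N nsz).filter (fun B => q (fun x => B (σ x)))).card =
    ((PartOmega K N nsz).filter q).card := by
  classical
  apply Finset.card_bij' (fun B _ => fun x => B (σ x)) (fun B _ => fun x => B (σ.symm x))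
  · intro B hB
    simp only [Finset.mem_filter] at hB ⊢
    exact ⟨comp_perm_mem σ hB.1, hB.2⟩
  · intro B hB
    simp only [Finset.mem_filter] at hB ⊢
    refine ⟨comp_perm_mem σ.symm hB.1, ?_⟩
    have e : (fun x => B (σ.symm (σ x))) = B := funext fun x => by
      rw [Equiv.symm_apply_apply]
    show q (fun x => B (σ.symm (σ x)))
    rw [e]; exact hB.2
  · intro B hB; funext x
    show B (σ ((Equiv.symm σ) x)) = B x
    rw [Equiv.apply_symm_apply]
  · intro B hB; funext x
    show B ((Equiv.symm σ) (σ x)) = B x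
    rw [Equiv.symm_apply_apply]

lemma pair_count_symm {i j i' j' : Fin N} (hij : i ≠ j) (h' : i' ≠ j') (k l : Fin K) :
    ((PartOmega K N nsz).filter (fun B => B i = k ∧ B j = l)).card =
    ((PartOmega K N nsz).filter (fun B => B i' = k ∧ B j' = l)).card := by
  obtain ⟨σ, hσi, hσj⟩ := exists_perm_pair hij h'
  have h := filter_comp_perm_card (nsz := nsz) σ (fun B => B i = k ∧ B j = l)
  simp only [hσi, hσj] at h
  convert h.symm using 2 <;> congr!

lemma single_count_symm (i i' : Fin N) (k : Fin K) :
    ((PartOmega K N nsz).filter (fun B => B i = k)).card =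
    ((PartOmega K N nsz).filter (fun B => B i' = k)).card := by
  have h := filter_comp_perm_card (nsz := nsz) (Equiv.swap i i') (fun B => B i = k)
  simp only [Equiv.swap_apply_left] at h
  convert h.symm using 2 <;> congr!

lemma sum_single (k : Fin K) :
    ∑ i : Fin N, ((PartOmega K N nsz).filter (fun B => B i = k)).card
      = (PartOmega K N nsz).card * nsz k := by
  calc ∑ i : Fin N, ((PartOmega K N nsz).filter (fun B => B i = k)).card
      = ∑ i : Fin N, ∑ B ∈ PartOmega K N nsz, if B i = k then 1 else 0 := by
        simp only [Finset.card_filter]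
    _ = ∑ B ∈ PartOmega K N nsz, ∑ i : Fin N, if B i = k then 1 else 0 := Finset.sum_comm
    _ = ∑ B ∈ PartOmega K N nsz, nsz k := by
        refine Finset.sum_congr rfl fun B hB => ?_
        rw [← Finset.card_filter]
        exact mem_PartOmega.mp hB k
    _ = (PartOmega K N nsz).card * nsz k := by rw [Finset.sum_const, smul_eq_mul]

lemma single_count (i : Fin N) (k : Fin K) :
    N * ((PartOmega K N nsz).filter (fun B => B i = k)).card
      = (PartOmega K N nsz).card * nsz k := by
  have h := sum_single (N := N) (nsz := nsz) k
  rw [Finset.sum_congr rfl (fun i' _ => single_count_symm i' i k)] at h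
  simpa [Finset.sum_const, Finset.card_univ, mul_comm] using h

lemma sum_pair (k l : Fin K) :
    ∑ i : Fin N, ∑ j : Fin N,
        ((PartOmega K N nsz).filter (fun B => B i = k ∧ B j = l)).card
      = (PartOmega K N nsz).card * (nsz k * nsz l) := by
  calc ∑ i : Fin N, ∑ j : Fin N,
        ((PartOmega K N nsz).filter (fun B => B i = k ∧ B j = l)).card
      = ∑ i : Fin N, ∑ j : Fin N, ∑ B ∈ PartOmega K N nsz,
          if B i = k ∧ B j = l then 1 else 0 := by
        simp only [Finset.card_filter]
    _ = ∑ B ∈ PartOmega K N nsz, ∑ i : Fin N, ∑ j : Fin N,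
          if B i = k ∧ B j = l then 1 else 0 := by
        rw [Finset.sum_congr rfl (fun i _ => Finset.sum_comm), Finset.sum_comm]
    _ = ∑ B ∈ PartOmega K N nsz, nsz k * nsz l := by
        refine Finset.sum_congr rfl fun B hB => ?_
        have hsplit : ∀ i j : Fin N, (if B i = k ∧ B j = l then (1:ℕ) else 0)
            = (if B i = k then 1 else 0) * (if B j = l then 1 else 0) := by
          intro i j; by_cases h1 : B i = k <;> by_cases h2 : B j = l <;> simp [h1, h2]
        rw [Finset.sum_congr rfl fun i _ => Finset.sum_congr rfl fun j _ => hsplit i j]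
        rw [← Finset.sum_mul_sum, ← Finset.card_filter, ← Finset.card_filter,
          mem_PartOmega.mp hB k, mem_PartOmega.mp hB l]
    _ = (PartOmega K N nsz).card * (nsz k * nsz l) := by
        rw [Finset.sum_const, smul_eq_mul]

lemma sum_diag (k l : Fin K) :
    ∑ i : Fin N, ((PartOmega K N nsz).filter (fun B => B i = k ∧ B i = l)).card
      = if k = l then (PartOmega K N nsz).card * nsz k else 0 := by
  by_cases hkl : k = l
  · subst hkl
    simp only [if_pos rfl, and_self]
    exact sum_single k
  · rw [if_neg hkl]
    refine Finset.sum_eq_zero fun i _ => ?_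
    rw [Finset.card_eq_zero, Finset.filter_eq_empty_iff]
    rintro B _ ⟨h1, h2⟩
    exact hkl (h1 ▸ h2 ▸ rfl)

lemma pair_count {i j : Fin N} (hij : i ≠ j) (k l : Fin K) :
    N * (N - 1) * ((PartOmega K N nsz).filter (fun B => B i = k ∧ B j = l)).card
      + (if k = l then (PartOmega K N nsz).card * nsz k else 0)
      = (PartOmega K N nsz).card * (nsz k * nsz l) := by
  have hsum := sum_pair (N := N) (nsz := nsz) k l
  have hsplit : ∀ i' : Fin N,
      ∑ j' : Fin N, ((PartOmega K N nsz).filter (fun B => B i' = k ∧ B j' = l)).card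
        = (∑ j' ∈ Finset.univ.erase i',
            ((PartOmega K N nsz).filter (fun B => B i' = k ∧ B j' = l)).card)
          + ((PartOmega K N nsz).filter (fun B => B i' = k ∧ B i' = l)).card :=
    fun i' => (Finset.sum_erase_add _ _ (Finset.mem_univ i')).symm
  rw [Finset.sum_congr rfl (fun i' _ => hsplit i'), Finset.sum_add_distrib, sum_diag] at hsum
  have hconst : ∀ i' : Fin N, ∀ j' ∈ Finset.univ.erase i',
      ((PartOmega K N nsz).filter (fun B => B i' = k ∧ B j' = l)).card
        = ((PartOmega K N nsz).filter (fun B => B i = k ∧ B j = l)).card := by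
    intro i' j' hj'
    exact pair_count_symm (Ne.symm (Finset.mem_erase.mp hj').1) hij k l
  rw [Finset.sum_congr rfl (fun i' _ =>
      Finset.sum_congr rfl (fun j' hj' => hconst i' j' hj'))] at hsum
  simp only [Finset.sum_const, Finset.card_erase_of_mem (Finset.mem_univ _),
    Finset.card_univ, Fintype.card_fin, smul_eq_mul] at hsum
  rw [← hsum, mul_assoc]

lemma pair_count_real (hN : 2 ≤ N) {i j : Fin N} (hij : i ≠ j) (k l : Fin K) :
    ((((PartOmega K N nsz).filter (fun B => B i = k ∧ B j = l)).card) : ℝ)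
      = ((PartOmega K N nsz).card : ℝ) *
          ((nsz k : ℝ) * (nsz l : ℝ) - if k = l then (nsz k : ℝ) else 0)
          / ((N : ℝ) * ((N : ℝ) - 1)) := by
  have h := pair_count (nsz := nsz) hij k l
  have h1 : (1:ℕ) ≤ N := le_trans one_le_two hN
  have hcast := congrArg (Nat.cast : ℕ → ℝ) h
  push_cast [Nat.cast_sub h1] at hcast
  have hN0 : (N : ℝ) ≠ 0 := by positivity
  have hN1 : (N : ℝ) - 1 ≠ 0 := by
    have : (2:ℝ) ≤ (N:ℝ) := by exact_mod_cast hN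
    linarith
  rw [eq_div_iff (mul_ne_zero hN0 hN1)]
  split_ifs with hkl
  · rw [if_pos hkl] at hcast; linarith [hcast]
  · rw [if_neg hkl] at hcast; linarith [hcast]

lemma single_count_real (hN : 0 < N) (i : Fin N) (k : Fin K) :
    ((((PartOmega K N nsz).filter (fun B => B i = k)).card) : ℝ)
      = ((PartOmega K N nsz).card : ℝ) * (nsz k : ℝ) / (N : ℝ) := by
  have h := single_count (nsz := nsz) i k
  have hcast := congrArg (Nat.cast : ℕ → ℝ) h
  push_cast at hcast
  have hN0 : (N : ℝ) ≠ 0 := by positivity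
  rw [eq_div_iff hN0]
  linarith [hcast]

lemma sum_sq_dev {ι : Type*} (s : Finset ι) (Y : ι → ℝ) (hs : s.Nonempty) :
    ∑ i ∈ s, (Y i - (∑ j ∈ s, Y j) / s.card) ^ 2
      = (∑ i ∈ s, Y i ^ 2) - (∑ i ∈ s, Y i) ^ 2 / s.card := by
  have hn : (s.card : ℝ) ≠ 0 := Nat.cast_ne_zero.mpr hs.card_ne_zero
  have hrow : ∀ i, (Y i - (∑ j ∈ s, Y j) / s.card) ^ 2
      = Y i ^ 2 - 2 * Y i * ((∑ j ∈ s, Y j) / s.card)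
        + ((∑ j ∈ s, Y j) / s.card) ^ 2 := by intro i; ring
  rw [Finset.sum_congr rfl (fun i _ => hrow i), Finset.sum_add_distrib,
    Finset.sum_sub_distrib, ← Finset.sum_mul, Finset.sum_const, nsmul_eq_mul]
  field_simp
  simp only [← Finset.mul_sum]
  ring

lemma popVar_pairwise (hN : 2 ≤ N) (Y : Fin N → ℝ) :
    popVar N Y = (∑ i, ∑ j, (Y i - Y j) ^ 2) / (2 * (N : ℝ) * ((N : ℝ) - 1)) := by
  have hne : (Finset.univ : Finset (Fin N)).Nonempty :=
    ⟨⟨0, by omega⟩, Finset.mem_univ _⟩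
  have h := sq_mean_pairwise (Finset.univ : Finset (Fin N)) Y hne
  simp only [Finset.card_univ, Fintype.card_fin] at h
  rw [popVar, h, div_div, mul_assoc]

lemma popVar_offdiag (hN : 2 ≤ N) (Y : Fin N → ℝ) :
    popVar N Y = (∑ i, Y i ^ 2) / (N : ℝ)
      - (∑ i, Y i * ∑ j ∈ Finset.univ.erase i, Y j) / ((N : ℝ) * ((N : ℝ) - 1)) := by
  have hne : (Finset.univ : Finset (Fin N)).Nonempty :=
    ⟨⟨0, by omega⟩, Finset.mem_univ _⟩
  have hN0 : (N : ℝ) ≠ 0 := by positivity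
  have hN1 : (N : ℝ) - 1 ≠ 0 := by
    have : (2:ℝ) ≤ (N:ℝ) := by exact_mod_cast hN
    linarith
  have hA : (∑ i, Y i) ^ 2
      = (∑ i, Y i ^ 2) + ∑ i, Y i * ∑ j ∈ Finset.univ.erase i, Y j := by
    rw [sq, Finset.sum_mul, ← Finset.sum_add_distrib]
    refine Finset.sum_congr rfl fun i _ => ?_
    rw [← Finset.add_sum_erase _ Y (Finset.mem_univ i)]
    ring
  have hS := sum_sq_dev (Finset.univ : Finset (Fin N)) Y hne
  simp only [Finset.card_univ, Fintype.card_fin] at hS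
  rw [popVar, hS, hA]
  field_simp
  ring

lemma sum_ite_prod (i j : Fin N) (a b : Fin K) (u v : ℝ) :
    ∑ B ∈ PartOmega K N nsz, (if B i = a then u else 0) * (if B j = b then v else 0)
      = (((PartOmega K N nsz).filter (fun B => B i = a ∧ B j = b)).card : ℝ) * (u * v) := by
  have hB : ∀ B : Fin N → Fin K, (if B i = a then u else 0) * (if B j = b then v else 0)
      = if B i = a ∧ B j = b then u * v else 0 := by
    intro B; by_cases h1 : B i = a <;> by_cases h2 : B j = b <;> simp [h1, h2]
  rw [Finset.sum_congr rfl (fun B _ => hB B), ← Finset.sum_filter, Finset.sum_const,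
    nsmul_eq_mul]

lemma sum_sq_diff_Ybar (hN : 2 ≤ N) (hnsz : ∀ k, 2 ≤ nsz k) {k l : Fin K}
    (hkl : k ≠ l) (Y : Fin N → ℝ) :
    ∑ B ∈ PartOmega K N nsz, (rbYbar nsz B Y k - rbYbar nsz B Y l) ^ 2
      = ((PartOmega K N nsz).card : ℝ) *
          ((1 / (nsz k : ℝ) + 1 / (nsz l : ℝ)) * popVar N Y) := by
  classical
  have hnk : (nsz k : ℝ) ≠ 0 := Nat.cast_ne_zero.mpr (by have := hnsz k; omega)
  have hnl : (nsz l : ℝ) ≠ 0 := Nat.cast_ne_zero.mpr (by have := hnsz l; omega)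
  have hN0 : (N : ℝ) ≠ 0 := by positivity
  have hN1 : (N : ℝ) - 1 ≠ 0 := by
    have : (2:ℝ) ≤ (N:ℝ) := by exact_mod_cast hN
    linarith
  set M : ℝ := ((PartOmega K N nsz).card : ℝ) with hM
  set g : (Fin N → Fin K) → Fin N → ℝ :=
    fun B i => (if B i = k then Y i / (nsz k : ℝ) else 0)
      - (if B i = l then Y i / (nsz l : ℝ) else 0) with hg
  have hdiff : ∀ B : Fin N → Fin K,
      rbYbar nsz B Y k - rbYbar nsz B Y l = ∑ i, g B i := by
    intro B
    simp only [rbYbar, Finset.sum_filter, Finset.sum_div, hg]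
    rw [← Finset.sum_sub_distrib]
    refine Finset.sum_congr rfl fun i _ => ?_
    by_cases h1 : B i = k <;> by_cases h2 : B i = l <;> simp [h1, h2, hkl, ite_div, zero_div]
  have hsq : ∀ B : Fin N → Fin K,
      (rbYbar nsz B Y k - rbYbar nsz B Y l) ^ 2 = ∑ i, ∑ j, g B i * g B j := by
    intro B; rw [hdiff, sq, Finset.sum_mul_sum]
  rw [Finset.sum_congr rfl (fun B _ => hsq B), Finset.sum_comm,
    Finset.sum_congr rfl (fun i _ => Finset.sum_comm)]
  have hexp : ∀ (B : Fin N → Fin K) (i j : Fin N), g B i * g B j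
      = (if B i = k then Y i / (nsz k : ℝ) else 0) * (if B j = k then Y j / (nsz k : ℝ) else 0)
        - (if B i = k then Y i / (nsz k : ℝ) else 0) * (if B j = l then Y j / (nsz l : ℝ) else 0)
        - ((if B i = l then Y i / (nsz l : ℝ) else 0) * (if B j = k then Y j / (nsz k : ℝ) else 0)
        - (if B i = l then Y i / (nsz l : ℝ) else 0) * (if B j = l then Y j / (nsz l : ℝ) else 0)) := by
    intro B i j; rw [hg]; ring
  have hoff : ∀ i j : Fin N, i ≠ j → ∑ B ∈ PartOmega K N nsz, g B i * g B j
      = -(M * (1 / (nsz k : ℝ) + 1 / (nsz l : ℝ)) / ((N : ℝ) * ((N : ℝ) - 1)))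
          * (Y i * Y j) := by
    intro i j hij
    rw [Finset.sum_congr rfl (fun B _ => hexp B i j), Finset.sum_sub_distrib,
      Finset.sum_sub_distrib, Finset.sum_sub_distrib, sum_ite_prod, sum_ite_prod,
      sum_ite_prod, sum_ite_prod, pair_count_real hN hij k k, pair_count_real hN hij k l,
      pair_count_real hN hij l k, pair_count_real hN hij l l,
      if_pos rfl, if_pos rfl, if_neg hkl, if_neg (Ne.symm hkl)]
    field_simp
    ring
  have hdiag : ∀ i : Fin N, ∑ B ∈ PartOmega K N nsz, g B i * g B i
      = (M * (1 / (nsz k : ℝ) + 1 / (nsz l : ℝ)) / (N : ℝ)) * Y i ^ 2 := by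
    intro i
    have hNpos : 0 < N := by omega
    have e1 : ((PartOmega K N nsz).filter (fun B => B i = k ∧ B i = k)).card
        = ((PartOmega K N nsz).filter (fun B => B i = k)).card := by
      congr 1; apply Finset.filter_congr; intro B _; simp
    have e4 : ((PartOmega K N nsz).filter (fun B => B i = l ∧ B i = l)).card
        = ((PartOmega K N nsz).filter (fun B => B i = l)).card := by
      congr 1; apply Finset.filter_congr; intro B _; simp
    have e2 : ((PartOmega K N nsz).filter (fun B => B i = k ∧ B i = l)).card = 0 := by
      rw [Finset.card_eq_zero, Finset.filter_eq_empty_iff]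
      rintro B _ ⟨h1, h2⟩; exact hkl (h1 ▸ h2 ▸ rfl)
    have e3 : ((PartOmega K N nsz).filter (fun B => B i = l ∧ B i = k)).card = 0 := by
      rw [Finset.card_eq_zero, Finset.filter_eq_empty_iff]
      rintro B _ ⟨h1, h2⟩; exact hkl (h2 ▸ h1 ▸ rfl)
    rw [Finset.sum_congr rfl (fun B _ => hexp B i i), Finset.sum_sub_distrib,
      Finset.sum_sub_distrib, Finset.sum_sub_distrib, sum_ite_prod, sum_ite_prod,
      sum_ite_prod, sum_ite_prod, e1, e2, e3, e4,
      single_count_real hNpos i k, single_count_real hNpos i l]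
    field_simp
    ring
  have hsplit : ∀ i : Fin N, ∑ j, ∑ B ∈ PartOmega K N nsz, g B i * g B j
      = (∑ j ∈ Finset.univ.erase i, ∑ B ∈ PartOmega K N nsz, g B i * g B j)
        + ∑ B ∈ PartOmega K N nsz, g B i * g B i :=
    fun i => (Finset.sum_erase_add _ _ (Finset.mem_univ i)).symm
  rw [Finset.sum_congr rfl (fun i _ => hsplit i), Finset.sum_add_distrib,
    Finset.sum_congr rfl (fun i _ => Finset.sum_congr rfl
      (fun j hj => hoff i j (Ne.symm (Finset.mem_erase.mp hj).1))),
    Finset.sum_congr rfl (fun i _ => hdiag i)]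
  simp only [← Finset.mul_sum]
  rw [popVar_offdiag hN Y]
  ring

lemma sum_rbSk2 (hN : 2 ≤ N) (hnsz : ∀ k, 2 ≤ nsz k) (k : Fin K) (Y : Fin N → ℝ) :
    ∑ B ∈ PartOmega K N nsz, rbSk2 nsz B Y k
      = ((PartOmega K N nsz).card : ℝ) * popVar N Y := by
  classical
  have hnk2 : (2:ℝ) ≤ (nsz k : ℝ) := by exact_mod_cast hnsz k
  have hnk : (nsz k : ℝ) ≠ 0 := by linarith
  have hnk1 : (nsz k : ℝ) - 1 ≠ 0 := by linarith
  have hN0 : (N : ℝ) ≠ 0 := by positivity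
  have hN1 : (N : ℝ) - 1 ≠ 0 := by
    have : (2:ℝ) ≤ (N:ℝ) := by exact_mod_cast hN
    linarith
  have hstep : ∀ B ∈ PartOmega K N nsz, rbSk2 nsz B Y k
      = (∑ i ∈ Finset.univ.filter (fun i => B i = k),
          ∑ j ∈ Finset.univ.filter (fun i => B i = k), (Y i - Y j) ^ 2)
        / (2 * (nsz k : ℝ) * ((nsz k : ℝ) - 1)) := by
    intro B hB
    have hcard := mem_PartOmega.mp hB k
    have hne' : (Finset.univ.filter (fun i => B i = k)).Nonempty := by
      rw [← Finset.card_pos, hcard]; have := hnsz k; omega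
    have h := sq_mean_pairwise (Finset.univ.filter (fun i => B i = k)) Y hne'
    rw [hcard] at h
    rw [rbSk2, rbYbar, h, div_div, mul_assoc]
  rw [Finset.sum_congr rfl hstep, ← Finset.sum_div]
  have hinner : ∀ B : Fin N → Fin K,
      (∑ i ∈ Finset.univ.filter (fun i => B i = k),
        ∑ j ∈ Finset.univ.filter (fun i => B i = k), (Y i - Y j) ^ 2)
      = ∑ i : Fin N, ∑ j : Fin N,
          if B i = k ∧ B j = k then (Y i - Y j) ^ 2 else 0 := by
    intro B
    rw [Finset.sum_filter]
    refine Finset.sum_congr rfl fun i _ => ?_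
    by_cases hpi : B i = k
    · rw [if_pos hpi, Finset.sum_filter]
      exact Finset.sum_congr rfl fun j _ => by by_cases hpj : B j = k <;> simp [hpi, hpj]
    · simp [hpi]
  rw [Finset.sum_congr rfl (fun B _ => hinner B), Finset.sum_comm,
    Finset.sum_congr rfl (fun i _ => Finset.sum_comm)]
  have hcount : ∀ i j : Fin N, i ≠ j →
      ∑ B ∈ PartOmega K N nsz, (if B i = k ∧ B j = k then (Y i - Y j) ^ 2 else 0)
        = ((PartOmega K N nsz).card : ℝ) * ((nsz k : ℝ) * (nsz k : ℝ) - (nsz k : ℝ))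
          / ((N : ℝ) * ((N : ℝ) - 1)) * (Y i - Y j) ^ 2 := by
    intro i j hij
    rw [← Finset.sum_filter, Finset.sum_const, nsmul_eq_mul,
      pair_count_real hN hij k k, if_pos rfl]
  have hdiag : ∀ i : Fin N,
      ∑ B ∈ PartOmega K N nsz, (if B i = k ∧ B i = k then (Y i - Y i) ^ 2 else 0) = 0 := by
    intro i; refine Finset.sum_eq_zero fun B _ => ?_; split_ifs <;> simp
  have hsplit : ∀ i : Fin N,
      ∑ j : Fin N, ∑ B ∈ PartOmega K N nsz,
          (if B i = k ∧ B j = k then (Y i - Y j) ^ 2 else 0)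
        = ∑ j ∈ Finset.univ.erase i, ∑ B ∈ PartOmega K N nsz,
            (if B i = k ∧ B j = k then (Y i - Y j) ^ 2 else 0) := by
    intro i
    rw [← Finset.sum_erase_add _ _ (Finset.mem_univ i), hdiag i, add_zero]
  rw [Finset.sum_congr rfl (fun i _ => hsplit i),
    Finset.sum_congr rfl (fun i _ => Finset.sum_congr rfl
      (fun j hj => hcount i j (Ne.symm (Finset.mem_erase.mp hj).1)))]
  simp only [← Finset.mul_sum]
  have hfull : ∑ i : Fin N, ∑ j ∈ Finset.univ.erase i, (Y i - Y j) ^ 2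
      = ∑ i : Fin N, ∑ j : Fin N, (Y i - Y j) ^ 2 := by
    refine Finset.sum_congr rfl fun i _ => ?_
    rw [← Finset.sum_erase_add _ _ (Finset.mem_univ i)]
    simp
  rw [hfull, popVar_pairwise hN Y]
  field_simp

lemma sum_rbSbb2 (hK : 2 ≤ K) (hN : 2 ≤ N) (hnsz : ∀ k, 2 ≤ nsz k) (Y : Fin N → ℝ) :
    ∑ B ∈ PartOmega K N nsz, rbSbb2 nsz B Y
      = ((PartOmega K N nsz).card : ℝ) *
          ((popVar N Y / (K : ℝ)) * ∑ k, 1 / (nsz k : ℝ)) := by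
  classical
  have hK0 : (K : ℝ) ≠ 0 := by positivity
  have hK1 : (K : ℝ) - 1 ≠ 0 := by
    have : (2:ℝ) ≤ (K:ℝ) := by exact_mod_cast hK
    linarith
  have hstep : ∀ B : Fin N → Fin K, rbSbb2 nsz B Y
      = (∑ k, ∑ l, (rbYbar nsz B Y k - rbYbar nsz B Y l) ^ 2)
        / (2 * (K : ℝ) * ((K : ℝ) - 1)) := by
    intro B
    have hne' : (Finset.univ : Finset (Fin K)).Nonempty := ⟨⟨0, by omega⟩, Finset.mem_univ _⟩
    have h := sq_mean_pairwise (Finset.univ : Finset (Fin K)) (rbYbar nsz B Y) hne'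
    simp only [Finset.card_univ, Fintype.card_fin] at h
    rw [rbSbb2, rbYtilde, h, div_div, mul_assoc]
  rw [Finset.sum_congr rfl (fun B _ => hstep B), ← Finset.sum_div, Finset.sum_comm,
    Finset.sum_congr rfl (fun k _ => Finset.sum_comm)]
  have hdiag : ∀ k : Fin K,
      ∑ B ∈ PartOmega K N nsz, (rbYbar nsz B Y k - rbYbar nsz B Y k) ^ 2 = 0 := by
    intro k; refine Finset.sum_eq_zero fun B _ => by simp
  have hsplit : ∀ k : Fin K,
      ∑ l, ∑ B ∈ PartOmega K N nsz, (rbYbar nsz B Y k - rbYbar nsz B Y l) ^ 2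
        = ∑ l ∈ Finset.univ.erase k, ((PartOmega K N nsz).card : ℝ) *
            ((1 / (nsz k : ℝ) + 1 / (nsz l : ℝ)) * popVar N Y) := by
    intro k
    rw [← Finset.sum_erase_add _ _ (Finset.mem_univ k), hdiag k, add_zero]
    exact Finset.sum_congr rfl fun l hl =>
      sum_sq_diff_Ybar hN hnsz (Ne.symm (Finset.mem_erase.mp hl).1) Y
  rw [Finset.sum_congr rfl (fun k _ => hsplit k)]
  have hsum : ∑ k : Fin K, ∑ l ∈ Finset.univ.erase k,
      ((PartOmega K N nsz).card : ℝ) * ((1 / (nsz k : ℝ) + 1 / (nsz l : ℝ)) * popVar N Y)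
      = ((PartOmega K N nsz).card : ℝ) * popVar N Y *
          (2 * ((K : ℝ) - 1) * ∑ k, 1 / (nsz k : ℝ)) := by
    have hrow : ∀ k : Fin K, ∑ l ∈ Finset.univ.erase k,
        ((PartOmega K N nsz).card : ℝ) * ((1 / (nsz k : ℝ) + 1 / (nsz l : ℝ)) * popVar N Y)
        = ((PartOmega K N nsz).card : ℝ) * popVar N Y *
            (((K : ℝ) - 1) * (1 / (nsz k : ℝ)) + ((∑ l, 1 / (nsz l : ℝ)) - 1 / (nsz k : ℝ))) := by
      intro k
      rw [Finset.sum_congr rfl (fun l _ => by ring :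
        ∀ l ∈ Finset.univ.erase k,
          ((PartOmega K N nsz).card : ℝ) * ((1 / (nsz k : ℝ) + 1 / (nsz l : ℝ)) * popVar N Y)
          = ((PartOmega K N nsz).card : ℝ) * popVar N Y * (1 / (nsz k : ℝ))
            + ((PartOmega K N nsz).card : ℝ) * popVar N Y * (1 / (nsz l : ℝ)))]
      rw [Finset.sum_add_distrib, Finset.sum_const,
        Finset.card_erase_of_mem (Finset.mem_univ _), Finset.card_univ, Fintype.card_fin,
        ← Finset.mul_sum, Finset.sum_erase_eq_sub (Finset.mem_univ k), nsmul_eq_mul]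
      push_cast [Nat.cast_sub (by omega : 1 ≤ K)]
      ring
    rw [Finset.sum_congr rfl (fun k _ => hrow k), ← Finset.mul_sum]
    congr 1
    rw [Finset.sum_add_distrib, ← Finset.mul_sum, Finset.sum_sub_distrib,
      Finset.sum_const, Finset.card_univ, Fintype.card_fin, nsmul_eq_mul]
    ring
  rw [hsum]
  field_simp


end RBAux


/-- **Random blocking.** If units are partitioned into `K` blocks of fixed sizes uniformly
at random, then `E[S_k²(z)] = S²(z)` for every block `k`, and
`E[S_bb²(z)] = (S²(z)/K) Σ_k n_k⁻¹`; consequently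
`K⁻¹ Σ_k n_k⁻¹ E[S_k²(z)] = E[S_bb²(z)]`. -/
theorem random_blocking_variance_expectations
    (T K N : ℕ) (hK : 2 ≤ K) (nsz : Fin K → ℕ) (hnsz : ∀ k, 2 ≤ nsz k)
    (hN : ∑ k, nsz k = N) (Y : Fin N → Fin T → ℝ)
    (hne : (PartOmega K N nsz).Nonempty) :
    ∀ z : Fin T,
      (∀ k : Fin K,
        fexp (PartOmega K N nsz) (fun B => rbSk2 nsz B (fun i => Y i z) k) =
          popVar N (fun i => Y i z)) ∧
      fexp (PartOmega K N nsz) (fun B => rbSbb2 nsz B (fun i => Y i z)) =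
        (popVar N (fun i => Y i z) / (K : ℝ)) * ∑ k, 1 / (nsz k : ℝ) ∧
      (1 / (K : ℝ)) * ∑ k, (1 / (nsz k : ℝ)) *
          fexp (PartOmega K N nsz) (fun B => rbSk2 nsz B (fun i => Y i z) k) =
        fexp (PartOmega K N nsz) (fun B => rbSbb2 nsz B (fun i => Y i z)) := by
  intro z
  have hN2 : 2 ≤ N := by
    have h0 : nsz ⟨0, by omega⟩ ≤ ∑ k, nsz k :=
      Finset.single_le_sum (fun _ _ => Nat.zero_le _) (Finset.mem_univ _)
    have h1 := hnsz ⟨0, by omega⟩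
    omega
  have hM : (((PartOmega K N nsz).card : ℕ) : ℝ) ≠ 0 :=
    Nat.cast_ne_zero.mpr hne.card_ne_zero
  have h1 : ∀ k : Fin K,
      fexp (PartOmega K N nsz) (fun B => rbSk2 nsz B (fun i => Y i z) k) =
        popVar N (fun i => Y i z) := by
    intro k
    rw [fexp, sum_rbSk2 hN2 hnsz k (fun i => Y i z), mul_comm, mul_div_assoc,
      div_self hM, mul_one]
  have h2 : fexp (PartOmega K N nsz) (fun B => rbSbb2 nsz B (fun i => Y i z)) =
      (popVar N (fun i => Y i z) / (K : ℝ)) * ∑ k, 1 / (nsz k : ℝ) := by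
    rw [fexp, sum_rbSbb2 hK hN2 hnsz (fun i => Y i z), mul_comm, mul_div_assoc,
      div_self hM, mul_one]
  refine ⟨h1, h2, ?_⟩
  calc (1 / (K : ℝ)) * ∑ k, (1 / (nsz k : ℝ)) *
          fexp (PartOmega K N nsz) (fun B => rbSk2 nsz B (fun i => Y i z) k)
      = (1 / (K : ℝ)) * ∑ k, (1 / (nsz k : ℝ)) * popVar N (fun i => Y i z) := by
        rw [Finset.sum_congr rfl (fun k _ => by rw [h1 k])]
    _ = (popVar N (fun i => Y i z) / (K : ℝ)) * ∑ k, 1 / (nsz k : ℝ) := by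
        rw [← Finset.sum_mul]
        ring
    _ = fexp (PartOmega K N nsz) (fun B => rbSbb2 nsz B (fun i => Y i z)) := h2.symm
end
end

section
/- Under a BIBD, the adjusted estimator coincides with the weighted least-squares estimator of the additive model: for any stationary point (τ_1,…,τ_T, β_1,…,β_K) of the weighted least-squares loss L(τ,β) = Σ_k Σ_{z=1}^T 1[z∈R_k] n_k^{-1} Σ_{i: Z_i=z, b_i=k} (Y_i^{obs} − τ_z − β_k)² (i.e., any solution of the normal equations ∂L/∂β_k = 0 and ∂L/∂τ_z = 0, normalizing the intercept to zero), one has τ_z − τ_{z'} = τ̂^{BIBD-adj}(z,z') = (t/(lT))(Ŷ^{adj}(z) − Ŷ^{adj}(z')) for all z ≠ z'. (Equivalence of the adjusted estimator and weighted least squares) -/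
open Finset Filter MeasureTheory
open scoped BigOperators Topology Classical

noncomputable section

/-- **Equivalence of the adjusted estimator and weighted least squares.** Under a BIBD,
for any realized assignment and any stationary point `(τ, β)` of the weighted
least-squares loss for the additive model (with intercept normalized to zero), the
treatment-effect differences coincide with the adjusted estimator. -/
theorem bibd_adjusted_equals_wls
    {T : ℕ} (D : IBD T) (Lval lval : ℕ) (hLpos : 0 < Lval)
    (hBL : ∀ z, D.Lcount z = Lval)
    (hBl : ∀ z z', z ≠ z' → D.lcount z z' = lval)
    (a : D.Assign) (ha : a ∈ D.Omega)
    (tau : Fin T → ℝ) (beta : Fin D.K → ℝ)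
    -- normal equation ∂L/∂β_k = 0
    (hbeta : ∀ k : Fin D.K,
      ∑ z, (if z ∈ a.1 k then
        (∑ i ∈ (D.blk k).filter (fun i => a.2 i = z),
          (D.Y i (a.2 i) - tau z - beta k)) / (D.n k : ℝ)
      else 0) = 0)
    -- normal equation ∂L/∂τ_z = 0
    (htau : ∀ z : Fin T,
      ∑ k, (if z ∈ a.1 k then
        (∑ i ∈ (D.blk k).filter (fun i => a.2 i = z),
          (D.Y i (a.2 i) - tau z - beta k)) / (D.n k : ℝ)
      else 0) = 0) :
    ∀ z z' : Fin T, z ≠ z' →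
      tau z - tau z' =
        ((D.t : ℝ) / ((lval : ℝ) * (T : ℝ))) * (D.Yadj a z - D.Yadj a z') := by
  classical
  -- unpack the assignment validity
  rw [IBD.Omega, Finset.mem_filter] at ha
  simp only [Finset.mem_univ, true_and, IBD.ValidZ] at ha
  obtain ⟨hVR, hZmem, hcnt⟩ := ha
  have htT := D.htT
  have ht2 := D.ht
  have htpos : 0 < D.t := by omega
  have htR : (D.t : ℝ) ≠ 0 := by positivity
  -- each realized block subset has cardinality t
  have hRcard : ∀ k, (a.1 k).card = D.t := by
    intro k
    apply D.hrcard
    intro h0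
    have h1 := hVR (a.1 k)
    rw [h0, Finset.card_eq_zero] at h1
    have hk : k ∈ Finset.univ.filter (fun k' => a.1 k' = a.1 k) := by simp
    rw [h1] at hk
    exact absurd hk (Finset.notMem_empty k)
  -- fiberwise counting: number of blocks containing a given pair
  have hF2 : ∀ z z' : Fin T,
      (Finset.univ.filter fun k => z ∈ a.1 k ∧ z' ∈ a.1 k).card = D.lcount z z' := by
    intro z z'
    rw [Finset.card_eq_sum_card_fiberwise (f := a.1)
      (t := Finset.univ.filter (fun ω : Finset (Fin T) => z ∈ ω ∧ z' ∈ ω))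
      (fun k hk => by
        simp only [Finset.mem_coe, Finset.mem_filter, Finset.mem_univ, true_and] at hk ⊢
        exact hk)]
    unfold IBD.lcount
    refine Finset.sum_congr rfl fun ω hω => ?_
    rw [← hVR ω]
    congr 1
    ext k
    simp only [Finset.mem_filter, Finset.mem_univ, true_and] at hω ⊢
    constructor
    · rintro ⟨_, h⟩; exact h
    · intro h; exact ⟨by rw [h]; exact hω, h⟩
  have hll : ∀ w : Fin T, D.lcount w w = D.Lcount w := by
    intro w
    unfold IBD.lcount IBD.Lcount
    congr 1
    ext ω
    simp [and_self]
  -- number of blocks containing a given treatment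
  have hF : ∀ z : Fin T,
      (Finset.univ.filter fun k => z ∈ a.1 k).card = D.Lcount z := by
    intro z
    have h1 : (Finset.univ.filter fun k => z ∈ a.1 k) =
        (Finset.univ.filter fun k => z ∈ a.1 k ∧ z ∈ a.1 k) := by
      simp only [and_self]
    rw [h1, hF2, hll]
  -- counting identity: ∑_{z'} l_{z,z'} = t * L_z
  have htL : ∀ z : Fin T, ∑ z', D.lcount z z' = D.t * D.Lcount z := by
    intro z
    unfold IBD.lcount IBD.Lcount
    have h1 : ∀ z' : Fin T,
        (∑ ω ∈ Finset.univ.filter (fun ω : Finset (Fin T) => z ∈ ω ∧ z' ∈ ω), D.r ω)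
          = ∑ ω : Finset (Fin T), if z ∈ ω ∧ z' ∈ ω then D.r ω else 0 := by
      intro z'; rw [Finset.sum_filter]
    have h2 : ∀ ω : Finset (Fin T),
        (∑ z' : Fin T, if z ∈ ω ∧ z' ∈ ω then D.r ω else 0) =
          D.t * (if z ∈ ω then D.r ω else 0) := by
      intro ω
      by_cases hz : z ∈ ω
      · simp only [hz, true_and, if_true]
        rw [Finset.sum_ite_mem, Finset.univ_inter, Finset.sum_const, smul_eq_mul]
        by_cases hr : D.r ω = 0
        · simp [hr]
        · rw [D.hrcard ω hr]
      · simp [hz]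
    calc ∑ z' : Fin T, ∑ ω ∈ Finset.univ.filter
            (fun ω : Finset (Fin T) => z ∈ ω ∧ z' ∈ ω), D.r ω
        = ∑ z' : Fin T, ∑ ω : Finset (Fin T), if z ∈ ω ∧ z' ∈ ω then D.r ω else 0 :=
          Finset.sum_congr rfl fun z' _ => h1 z'
      _ = ∑ ω : Finset (Fin T), ∑ z' : Fin T, if z ∈ ω ∧ z' ∈ ω then D.r ω else 0 :=
          Finset.sum_comm
      _ = ∑ ω : Finset (Fin T), D.t * (if z ∈ ω then D.r ω else 0) :=
          Finset.sum_congr rfl fun ω _ => h2 ω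
      _ = D.t * ∑ ω : Finset (Fin T), (if z ∈ ω then D.r ω else 0) := by
          rw [Finset.mul_sum]
      _ = D.t * ∑ ω ∈ Finset.univ.filter (fun ω : Finset (Fin T) => z ∈ ω), D.r ω := by
          rw [Finset.sum_filter]
  -- block size facts
  have hn0 : ∀ k, (D.n k : ℝ) ≠ 0 := fun k => by
    have := D.hnpos k; unfold IBD.n IBD.blk; positivity
  have hnt : ∀ k, ((D.n k / D.t : ℕ) : ℝ) = (D.n k : ℝ) / (D.t : ℝ) := fun k =>
    Nat.cast_div (D.hdvd k) htR
  -- simplify the summands of the normal equations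
  have hE : ∀ k : Fin D.K, ∀ w ∈ a.1 k,
      (∑ i ∈ (D.blk k).filter (fun i => a.2 i = w),
        (D.Y i (a.2 i) - tau w - beta k)) / (D.n k : ℝ)
      = (1/(D.t:ℝ)) * (D.Yhatk a k w - tau w - beta k) := by
    intro k w hw
    have hcard := hcnt k w hw
    have hrw : ∀ i ∈ (D.blk k).filter (fun i => a.2 i = w),
        D.Y i (a.2 i) - tau w - beta k = D.Y i w - (tau w + beta k) := fun i hi => by
      rw [(Finset.mem_filter.mp hi).2]; ring
    rw [Finset.sum_congr rfl hrw, Finset.sum_sub_distrib, Finset.sum_const, hcard,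
      nsmul_eq_mul, hnt]
    have hY : D.Yhatk a k w =
        (∑ i ∈ (D.blk k).filter (fun i => a.2 i = w), D.Y i w) / ((D.n k : ℝ) / (D.t : ℝ)) := by
      simp [IBD.Yhatk, hw]
    rw [hY]
    have hnk := hn0 k
    field_simp
    ring
  -- cleaned-up normal equations
  have hB : ∀ k, ∑ w ∈ a.1 k, (D.Yhatk a k w - tau w - beta k) = 0 := by
    intro k
    have h := hbeta k
    rw [Finset.sum_ite_mem, Finset.univ_inter] at h
    rw [Finset.sum_congr rfl (fun w hw => hE k w hw), ← Finset.mul_sum] at h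
    have h1 : (1/(D.t:ℝ)) ≠ 0 := by positivity
    exact (mul_eq_zero.mp h).resolve_left h1
  have hTn : ∀ w : Fin T, ∑ k ∈ Finset.univ.filter (fun k => w ∈ a.1 k),
      (D.Yhatk a k w - tau w - beta k) = 0 := by
    intro w
    have h := htau w
    rw [← Finset.sum_filter] at h
    rw [Finset.sum_congr rfl (fun k hk => hE k w (Finset.mem_filter.mp hk).2),
      ← Finset.mul_sum] at h
    have h1 : (1/(D.t:ℝ)) ≠ 0 := by positivity
    exact (mul_eq_zero.mp h).resolve_left h1
  have hBsum : ∀ k, ∑ w ∈ a.1 k, D.Yhatk a k w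
      = (∑ w ∈ a.1 k, tau w) + (D.t:ℝ) * beta k := by
    intro k
    have h := hB k
    rw [Finset.sum_sub_distrib, Finset.sum_sub_distrib, Finset.sum_const, hRcard k,
      nsmul_eq_mul] at h
    linarith
  have hTsum : ∀ w : Fin T, ∑ k ∈ Finset.univ.filter (fun k => w ∈ a.1 k),
      (D.Yhatk a k w - beta k) = (Lval:ℝ) * tau w := by
    intro w
    have h := hTn w
    have hrw : ∀ k ∈ Finset.univ.filter (fun k => w ∈ a.1 k),
        D.Yhatk a k w - tau w - beta k = (D.Yhatk a k w - beta k) - tau w := fun k _ => by ring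
    rw [Finset.sum_congr rfl hrw, Finset.sum_sub_distrib, Finset.sum_const,
      hF w, hBL w, nsmul_eq_mul] at h
    linarith
  -- the adjusted estimator in terms of (tau, beta)
  have hYadj : ∀ w : Fin T, D.Yadj a w = (Lval:ℝ) * tau w
      - (1/(D.t:ℝ)) * ∑ k ∈ Finset.univ.filter (fun k => w ∈ a.1 k),
          ∑ u ∈ a.1 k, tau u := by
    intro w
    have h0 : D.Yadj a w = ∑ k ∈ Finset.univ.filter (fun k => w ∈ a.1 k),
        (D.Yhatk a k w - (1/(D.t:ℝ)) * ∑ u ∈ a.1 k, D.Yhatk a k u) := by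
      unfold IBD.Yadj IBD.Yadjk
      rw [← Finset.sum_filter]
    rw [h0]
    have hterm : ∀ k ∈ Finset.univ.filter (fun k => w ∈ a.1 k),
        D.Yhatk a k w - (1/(D.t:ℝ)) * ∑ u ∈ a.1 k, D.Yhatk a k u
        = (D.Yhatk a k w - beta k) - (1/(D.t:ℝ)) * ∑ u ∈ a.1 k, tau u := by
      intro k _
      rw [hBsum k]
      field_simp
      ring
    rw [Finset.sum_congr rfl hterm, Finset.sum_sub_distrib, hTsum w, ← Finset.mul_sum]
  -- the double sum of tau
  have hDS : ∀ w : Fin T, ∑ k ∈ Finset.univ.filter (fun k => w ∈ a.1 k),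
      ∑ u ∈ a.1 k, tau u = ∑ u : Fin T, (D.lcount w u : ℝ) * tau u := by
    intro w
    have h1 : ∀ k ∈ Finset.univ.filter (fun k => w ∈ a.1 k),
        ∑ u ∈ a.1 k, tau u = ∑ u : Fin T, if u ∈ a.1 k then tau u else 0 := by
      intro k _; rw [Finset.sum_ite_mem, Finset.univ_inter]
    rw [Finset.sum_congr rfl h1, Finset.sum_comm]
    refine Finset.sum_congr rfl fun u _ => ?_
    rw [← Finset.sum_filter, Finset.filter_filter, Finset.sum_const, hF2 w u, nsmul_eq_mul]
  -- now fix z ≠ z'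
  intro z z' hzz'
  -- counting arithmetic
  have hA1 : D.t * Lval = Lval + ∑ u ∈ Finset.univ.erase z, D.lcount z u := by
    have h := htL z
    rw [hBL z] at h
    rw [← h, ← Finset.add_sum_erase _ _ (Finset.mem_univ z), hll z, hBL z]
  have hA2 : ∀ u ∈ Finset.univ.erase z, D.lcount z u = lval := by
    intro u hu
    exact hBl z u (Ne.symm (Finset.mem_erase.mp hu).1)
  have hA3 : ∑ u ∈ Finset.univ.erase z, D.lcount z u = (Finset.univ.erase z).card * lval := by
    rw [Finset.sum_congr rfl hA2, Finset.sum_const, smul_eq_mul]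
  have hce : (Finset.univ.erase z).card = T - 1 := by
    rw [Finset.card_erase_of_mem (Finset.mem_univ z), Finset.card_univ, Fintype.card_fin]
  have hNat : D.t * Lval + lval = T * lval + Lval := by
    rw [hA3, hce] at hA1
    have hTmul : T * lval = (T - 1) * lval + lval := by
      obtain ⟨n, rfl⟩ : ∃ n, T = n + 1 := ⟨T - 1, by omega⟩
      simp [Nat.succ_mul]
    omega
  have hpos : 0 < T * lval := by
    have h2L : 2 * Lval ≤ D.t * Lval := Nat.mul_le_mul_right _ ht2
    omega
  have hReal : (D.t:ℝ) * (Lval:ℝ) + (lval:ℝ) = (T:ℝ) * (lval:ℝ) + (Lval:ℝ) := by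
    exact_mod_cast congrArg (Nat.cast : ℕ → ℝ) hNat
  have hlT : (lval:ℝ) * (T:ℝ) ≠ 0 := by
    have : (0:ℝ) < (T * lval : ℕ) := by exact_mod_cast hpos
    push_cast at this
    nlinarith
  -- value of the double sums
  have hDSval : ∀ w : Fin T, ∑ u : Fin T, (D.lcount w u : ℝ) * tau u
      = (Lval:ℝ) * tau w + (lval:ℝ) * ((∑ u : Fin T, tau u) - tau w) := by
    intro w
    rw [← Finset.add_sum_erase _ _ (Finset.mem_univ w), hll w, hBL w]
    congr 1
    have h2 : ∀ u ∈ Finset.univ.erase w, (D.lcount w u : ℝ) * tau u = lval * tau u := by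
      intro u hu
      rw [hBl w u (Ne.symm (Finset.mem_erase.mp hu).1)]
    rw [Finset.sum_congr rfl h2, ← Finset.mul_sum,
      Finset.sum_erase_eq_sub (Finset.mem_univ w)]
  -- final algebra
  have key : (D.t:ℝ) * (D.Yadj a z - D.Yadj a z') = (lval:ℝ) * T * (tau z - tau z') := by
    rw [hYadj z, hYadj z', hDS z, hDS z', hDSval z, hDSval z']
    field_simp
    linear_combination (tau z - tau z') * hReal
  have hdiff : D.Yadj a z - D.Yadj a z' = (lval:ℝ) * T * (tau z - tau z') / D.t := by
    rw [eq_div_iff htR]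
    linear_combination key
  rw [hdiff]
  field_simp

  have hl0 : (lval:ℝ) ≠ 0 := left_ne_zero_of_mul hlT
  have hT0 : (T:ℝ) ≠ 0 := right_ne_zero_of_mul hlT
  field_simp
end
end
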